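/- arXiv:2110.03310 — 5 statements merged into one kernel-verified Lean document; each statement's English description precedes it below -/
import Mathlib

section
/- (Alexandrov maximum principle) For every n ≥ 1 there exists a constant c, depending only on n, with the following property: if Ω ⊆ ℝ^n is a bounded open convex set and u ∈ C(closure(Ω)) is convex on Ω with u = 0 on ∂Ω, then for every x ∈ Ω, |u(x)|^n ≤ c · dist(x, ∂Ω) · diam(Ω)^{n−1} · Mu(Ω). -/
open MeasureTheory
open scoped RealInnerProductSpace ENNReal

/-- The set of subgradients (relative to `Ω`) of `v` over the set `E`:
`∂v(E) = ⋃_{x ∈ E} {p : ∀ y ∈ Ω, v y ≥ v x + ⟪p, y - x⟫}`. -/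
def subgradientsOn {n : ℕ} (Ω : Set (EuclideanSpace ℝ (Fin n)))
    (v : EuclideanSpace ℝ (Fin n) → ℝ) (E : Set (EuclideanSpace ℝ (Fin n))) :
    Set (EuclideanSpace ℝ (Fin n)) :=
  ⋃ x ∈ E, {p | ∀ y ∈ Ω, v x + ⟪p, y - x⟫ ≤ v y}

/-- The Monge–Ampère measure of `v` on `Ω`, evaluated on a set `E`:
`Mv(E) = |∂v(E)|` (Lebesgue measure). -/
noncomputable def MAvol {n : ℕ} (Ω : Set (EuclideanSpace ℝ (Fin n)))
    (v : EuclideanSpace ℝ (Fin n) → ℝ) (E : Set (EuclideanSpace ℝ (Fin n))) : ℝ≥0∞ :=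
  volume (subgradientsOn Ω v E)

section AuxAlexandrov

variable {n : ℕ}

lemma aux_frontier_nonempty (hn : 1 ≤ n) {Ω : Set (EuclideanSpace ℝ (Fin n))}
    (hne : Ω.Nonempty) (hbd : Bornology.IsBounded Ω) : (frontier Ω).Nonempty := by
  haveI : Nontrivial (EuclideanSpace ℝ (Fin n)) := by
    refine ⟨⟨EuclideanSpace.single ⟨0, hn⟩ 1, 0, ?_⟩⟩
    intro h
    have := congrArg (fun v => v ⟨0, hn⟩) h
    simp [EuclideanSpace.single_apply] at this
  rcases Set.eq_empty_or_nonempty (frontier Ω) with h | h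
  · exfalso
    have hclopen : IsClopen Ω := isClopen_iff_frontier_eq_empty.mpr h
    rcases isClopen_iff.mp hclopen with rfl | rfl
    · exact hne.ne_empty rfl
    · exact NormedSpace.unbounded_univ ℝ _ hbd
  · exact h

lemma aux_nonpos (hn : 1 ≤ n) {Ω : Set (EuclideanSpace ℝ (Fin n))}
    (hO : IsOpen Ω) (hbd : Bornology.IsBounded Ω)
    {u : EuclideanSpace ℝ (Fin n) → ℝ} (hu : ContinuousOn u (closure Ω))
    (huc : ConvexOn ℝ Ω u) (hzero : ∀ x ∈ frontier Ω, u x = 0) :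
    ∀ x ∈ Ω, u x ≤ 0 := by
  intro x hx
  by_contra hpos
  push_neg at hpos
  have hK : IsCompact (closure Ω) := hbd.isCompact_closure
  obtain ⟨z, hzcl, hmax⟩ := hK.exists_isMaxOn ⟨x, subset_closure hx⟩ hu
  have hzpos : 0 < u z := lt_of_lt_of_le hpos (hmax (subset_closure hx))
  have hzΩ : z ∈ Ω := by
    by_contra hzo
    have hzf : z ∈ frontier Ω := by
      rw [frontier, hO.interior_eq]; exact ⟨hzcl, hzo⟩
    exact absurd (hzero z hzf) (ne_of_gt hzpos)
  have hconst : ∀ y ∈ Ω, u z ≤ u y := by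
    intro y hy
    obtain ⟨ε, hε, hball⟩ := Metric.isOpen_iff.mp hO z hzΩ
    set t : ℝ := ε / (2 * (‖z - y‖ + 1)) with ht
    have hden : (0:ℝ) < 2 * (‖z - y‖ + 1) := by positivity
    have htpos : 0 < t := div_pos hε hden
    set w := z + t • (z - y) with hw
    have hwΩ : w ∈ Ω := by
      apply hball
      have hdist : dist w z = t * ‖z - y‖ := by
        rw [dist_eq_norm]
        simp [hw, norm_smul, abs_of_pos htpos]
      rw [Metric.mem_ball, hdist]
      have h1 : t * ‖z - y‖ ≤ t * (‖z - y‖ + 1) := by nlinarith [norm_nonneg (z - y)]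
      have h2 : t * (‖z - y‖ + 1) = ε / 2 := by
        rw [ht]; field_simp
      linarith
    have h1t : (0:ℝ) < 1 + t := by linarith
    have hcomb : z = (t / (1 + t)) • y + (1 / (1 + t)) • w := by
      rw [hw]
      match_scalars <;> field_simp <;> ring
    have hab : t / (1 + t) + 1 / (1 + t) = 1 := by field_simp; ring
    have hcv := huc.2 hy hwΩ (by positivity) (by positivity) hab
    rw [← hcomb] at hcv
    simp only [smul_eq_mul] at hcv
    have huw : u w ≤ u z := hmax (subset_closure hwΩ)
    have hapos : 0 < t / (1 + t) := by positivity
    have hbpos : 0 < 1 / (1 + t) := by positivity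
    by_contra hlt
    push_neg at hlt
    have h5 : (1 / (1 + t)) * u w ≤ (1 / (1 + t)) * u z :=
      mul_le_mul_of_nonneg_left huw hbpos.le
    have h6 : (t / (1 + t)) * u y < (t / (1 + t)) * u z :=
      mul_lt_mul_of_pos_left hlt hapos
    have h7 : u z < (t / (1 + t)) * u z + (1 / (1 + t)) * u z := by linarith
    rw [← add_mul, hab, one_mul] at h7
    exact lt_irrefl _ h7
  obtain ⟨ζ, hζ⟩ := aux_frontier_nonempty hn ⟨x, hx⟩ hbd
  have hζcl : ζ ∈ closure Ω := frontier_subset_closure hζ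
  have hcw : ContinuousWithinAt u Ω ζ := (hu ζ hζcl).mono subset_closure
  haveI : (nhdsWithin ζ Ω).NeBot := mem_closure_iff_nhdsWithin_neBot.mp hζcl
  have hle : u z ≤ u ζ :=
    ge_of_tendsto hcw (Filter.eventually_of_mem self_mem_nhdsWithin hconst)
  rw [hzero ζ hζ] at hle
  linarith

end AuxAlexandrov

/-- Alexandrov maximum principle: `|u(x)|^n ≤ c · dist(x, ∂Ω) · diam(Ω)^{n-1} · Mu(Ω)`. -/
theorem alexandrov_maximum_principle (n : ℕ) (hn : 1 ≤ n) :
    ∃ c : ℝ, 0 < c ∧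
      ∀ (Ω : Set (EuclideanSpace ℝ (Fin n))),
        IsOpen Ω → Bornology.IsBounded Ω → Convex ℝ Ω →
        ∀ u : EuclideanSpace ℝ (Fin n) → ℝ,
          ContinuousOn u (closure Ω) → ConvexOn ℝ Ω u → (∀ x ∈ frontier Ω, u x = 0) →
          ∀ x ∈ Ω,
            ENNReal.ofReal (|u x| ^ n) ≤
              ENNReal.ofReal (c * Metric.infDist x (frontier Ω) * Metric.diam Ω ^ (n - 1)) *
                MAvol Ω u Ω := by
  have hnR : (0:ℝ) < (n:ℝ) := by exact_mod_cast Nat.lt_of_lt_of_le Nat.zero_lt_one hn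
  set k := n - 1 with hk
  have hnk : n = k + 1 := by omega
  set c : ℝ := 4 * (4 * (n:ℝ)) ^ k with hc
  have hcpos : 0 < c := by
    apply mul_pos (by norm_num)
    exact pow_pos (by linarith) k
  refine ⟨c, hcpos, ?_⟩
  intro Ω hO hbd hconv u hu huc hzero x₀ hx₀
  set d := Metric.infDist x₀ (frontier Ω) with hd'
  set D := Metric.diam Ω with hD'
  have hK : IsCompact (closure Ω) := hbd.isCompact_closure
  rcases eq_or_lt_of_le (aux_nonpos hn hO hbd hu huc hzero x₀ hx₀) with h0 | hneg
  · -- u x₀ = 0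
    rw [h0]
    simp [zero_pow (by omega : n ≠ 0)]
  set μ : ℝ := -u x₀ with hμ'
  have hμ : 0 < μ := by simp [hμ']; linarith
  have habs : |u x₀| = μ := abs_of_neg hneg
  -- frontier facts
  have hfne := aux_frontier_nonempty hn ⟨x₀, hx₀⟩ hbd
  have hfc : IsClosed (frontier Ω) := isClosed_frontier
  have hx₀f : x₀ ∉ frontier Ω := by
    rw [frontier, hO.interior_eq]; exact fun h => h.2 hx₀
  have hd : 0 < d := (hfc.notMem_iff_infDist_pos hfne).mp hx₀f
  -- D > 0
  have hD : 0 < D := by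
    obtain ⟨ε, hε, hball⟩ := Metric.isOpen_iff.mp hO x₀ hx₀
    set y := x₀ + (ε/2) • EuclideanSpace.single (⟨0, hn⟩ : Fin n) (1:ℝ) with hy
    have hdist : dist y x₀ = ε/2 := by
      rw [dist_eq_norm, hy]
      simp [norm_smul, EuclideanSpace.norm_single, abs_of_pos hε]
    have hyΩ : y ∈ Ω := hball (by rw [Metric.mem_ball, hdist]; linarith)
    have := Metric.dist_le_diam_of_mem hbd hyΩ hx₀
    rw [hdist] at this
    linarith
  -- nearest frontier point
  have hfb : Bornology.IsBounded (frontier Ω) := hbd.closure.subset frontier_subset_closure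
  have hfK : IsCompact (frontier Ω) := Metric.isCompact_of_isClosed_isBounded hfc hfb
  obtain ⟨z₀, hz₀f, hz₀d⟩ := hfK.exists_infDist_eq_dist hfne x₀
  have hz₀Ω : z₀ ∉ Ω := by
    rw [frontier, hO.interior_eq] at hz₀f; exact hz₀f.2
  -- Hahn-Banach direction
  obtain ⟨f, hf⟩ := geometric_hahn_banach_open_point hconv hO hz₀Ω
  set w' : EuclideanSpace ℝ (Fin n) := (InnerProductSpace.toDual ℝ _).symm f with hw''
  have hw'app : ∀ y, ⟪w', y⟫ = f y := fun y => InnerProductSpace.toDual_symm_apply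
  have hw'0 : w' ≠ 0 := by
    intro h
    have h2 := hf x₀ hx₀
    rw [← hw'app, ← hw'app, h] at h2
    simp at h2
  set w := ‖w'‖⁻¹ • w' with hwdef
  have hwn : ‖w‖ = 1 := norm_smul_inv_norm hw'0
  have hw : ∀ z ∈ closure Ω, ⟪w, z - x₀⟫ ≤ d := by
    have hwΩ : ∀ z ∈ Ω, ⟪w, z - x₀⟫ ≤ d := by
      intro z hz
      have h1 : ⟪w', z - x₀⟫ < ⟪w', z₀ - x₀⟫ := by
        rw [inner_sub_right, inner_sub_right, hw'app, hw'app, hw'app]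
        have := hf z hz
        linarith
      have h2 : ⟪w', z₀ - x₀⟫ ≤ ‖w'‖ * d := by
        calc ⟪w', z₀ - x₀⟫ ≤ ‖w'‖ * ‖z₀ - x₀‖ := real_inner_le_norm _ _
          _ = ‖w'‖ * d := by rw [hd', hz₀d, dist_eq_norm']
      have hnpos : 0 < ‖w'‖ := norm_pos_iff.mpr hw'0
      rw [hwdef, real_inner_smul_left]
      calc ‖w'‖⁻¹ * ⟪w', z - x₀⟫ ≤ ‖w'‖⁻¹ * (‖w'‖ * d) := by
            apply mul_le_mul_of_nonneg_left (le_of_lt (lt_of_lt_of_le h1 h2)) (by positivity)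
        _ = d := by field_simp
    intro z hz
    have hcl : closure Ω ⊆ {z | ⟪w, z - x₀⟫ ≤ d} :=
      closure_minimal hwΩ
        (isClosed_le (continuous_const.inner (continuous_id.sub continuous_const)) continuous_const)
    exact hcl hz
  -- orthonormal basis extending w
  have hcard : Module.finrank ℝ (EuclideanSpace ℝ (Fin n)) = Fintype.card (Fin n) := by
    simp
  set i₀ : Fin n := ⟨0, hn⟩ with hi₀
  have horth : Orthonormal ℝ (Set.restrict ({i₀} : Set (Fin n)) (fun _ => w)) := by
    constructor
    · intro i; exact hwn
    · intro i j hij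
      exact absurd (Subtype.ext (i.2.trans j.2.symm)) hij
  obtain ⟨b, hb0⟩ := horth.exists_orthonormalBasis_extension_of_card_eq hcard
  have hbw : b i₀ = w := hb0 i₀ rfl
  -- the box
  set a : ℝ := μ / (4 * d) with ha'
  set r : ℝ := μ / (4 * n * D) with hr'
  have hapos : 0 < a := by positivity
  have hrpos : 0 < r := by positivity
  set κ : Fin n → ℝ := fun i => if i = i₀ then a else r with hκ
  set B' : Set (Fin n → ℝ) := Set.pi Set.univ (fun i => Set.Icc 0 (κ i)) with hB'
  set B : Set (EuclideanSpace ℝ (Fin n)) := ((MeasurableEquiv.toLp 2 (Fin n → ℝ)).symm) ⁻¹' B' with hB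
  have hB'meas : MeasurableSet B' := MeasurableSet.univ_pi fun i => measurableSet_Icc
  have hvolB : volume B = ENNReal.ofReal a * ENNReal.ofReal r ^ k := by
    rw [hB, (EuclideanSpace.volume_preserving_symm_measurableEquiv_toLp (Fin n)).measure_preimage
      hB'meas.nullMeasurableSet]
    rw [hB', volume_pi_pi]
    simp_rw [Real.volume_Icc]
    rw [← Finset.mul_prod_erase Finset.univ _ (Finset.mem_univ i₀)]
    have hκ0 : κ i₀ - 0 = a := by simp [hκ]
    rw [hκ0]
    congr 1
    have hrest : ∀ i ∈ Finset.univ.erase i₀, ENNReal.ofReal (κ i - 0) = ENNReal.ofReal r := by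
      intro i hi
      simp [hκ, Finset.ne_of_mem_erase hi]
    rw [Finset.prod_congr rfl hrest, Finset.prod_const, Finset.card_erase_of_mem (Finset.mem_univ i₀),
      Finset.card_univ, Fintype.card_fin]
  -- S ⊆ subgradients
  set S := ⇑b.repr.symm '' B with hS
  have hSsub : S ⊆ subgradientsOn Ω u Ω := by
    rintro p ⟨xx, hxx, rfl⟩
    have hxx' : ∀ i, xx i ∈ Set.Icc 0 (κ i) := fun i => hxx i (Set.mem_univ i)
    have hbound : ∀ z ∈ closure Ω, ⟪b.repr.symm xx, z - x₀⟫ ≤ μ/2 := by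
      intro z hz
      have hzD : ‖z - x₀‖ ≤ D := by
        rw [← dist_eq_norm]
        calc dist z x₀ ≤ Metric.diam (closure Ω) :=
              Metric.dist_le_diam_of_mem hbd.closure hz (subset_closure hx₀)
          _ = D := by rw [Metric.diam_closure]
      rw [← b.sum_repr_symm, sum_inner]
      simp_rw [real_inner_smul_left]
      rw [← Finset.add_sum_erase Finset.univ _ (Finset.mem_univ i₀)]
      have h0le : xx i₀ * ⟪b i₀, z - x₀⟫ ≤ μ/4 := by
        rw [hbw]
        have hx0 := hxx' i₀
        have hx0ub : xx i₀ ≤ a := by simpa [hκ] using hx0.2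
        calc xx i₀ * ⟪w, z - x₀⟫ ≤ xx i₀ * d :=
              mul_le_mul_of_nonneg_left (hw z hz) hx0.1
          _ ≤ a * d := mul_le_mul_of_nonneg_right hx0ub hd.le
          _ = μ/4 := by rw [ha']; field_simp
      have hole : ∀ i ∈ Finset.univ.erase i₀, xx i * ⟪b i, z - x₀⟫ ≤ μ/(4*n) := by
        intro i hi
        have hxi := hxx' i
        have hxiub : xx i ≤ r := by
          have := hxi.2; simpa [hκ, Finset.ne_of_mem_erase hi] using this
        have hinner : ⟪b i, z - x₀⟫ ≤ D := by
          calc ⟪b i, z - x₀⟫ ≤ ‖b i‖ * ‖z - x₀‖ := real_inner_le_norm _ _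
            _ = ‖z - x₀‖ := by rw [b.orthonormal.1 i, one_mul]
            _ ≤ D := hzD
        calc xx i * ⟪b i, z - x₀⟫ ≤ xx i * D := mul_le_mul_of_nonneg_left hinner hxi.1
          _ ≤ r * D := mul_le_mul_of_nonneg_right hxiub hD.le
          _ = μ/(4*n) := by rw [hr']; field_simp
      have hsum : ∑ i ∈ Finset.univ.erase i₀, xx i * ⟪b i, z - x₀⟫ ≤ (n-1 : ℕ) * (μ/(4*n)) := by
        calc ∑ i ∈ Finset.univ.erase i₀, xx i * ⟪b i, z - x₀⟫
            ≤ (Finset.univ.erase i₀).card • (μ/(4*n)) := Finset.sum_le_card_nsmul _ _ _ hole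
          _ = (n-1 : ℕ) * (μ/(4*n)) := by
              rw [Finset.card_erase_of_mem (Finset.mem_univ i₀), Finset.card_univ,
                Fintype.card_fin, nsmul_eq_mul]
      have hfrac : ((n-1 : ℕ):ℝ) * (μ/(4*n)) ≤ μ/4 := by
        have h1 : ((n-1:ℕ):ℝ) ≤ (n:ℝ) := by exact_mod_cast Nat.sub_le n 1
        calc ((n-1 : ℕ):ℝ) * (μ/(4*n)) ≤ (n:ℝ) * (μ/(4*n)) :=
              mul_le_mul_of_nonneg_right h1 (by positivity)
          _ = μ/4 := by field_simp
      linarith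
    -- minimum argument
    set g : EuclideanSpace ℝ (Fin n) → ℝ := fun y => u y - ⟪b.repr.symm xx, y - x₀⟫ with hg
    have hgc : ContinuousOn g (closure Ω) :=
      hu.sub ((continuous_const.inner (continuous_id.sub continuous_const)).continuousOn)
    obtain ⟨y₀, hy₀cl, hy₀min⟩ := hK.exists_isMinOn ⟨x₀, subset_closure hx₀⟩ hgc
    have hy₀Ω : y₀ ∈ Ω := by
      by_contra hcon
      have hyf : y₀ ∈ frontier Ω := by
        rw [frontier, hO.interior_eq]; exact ⟨hy₀cl, hcon⟩
      have h1 : g y₀ ≤ g x₀ := hy₀min (subset_closure hx₀)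
      have h2 : g x₀ = u x₀ := by simp [hg]
      have h3 : g y₀ = -⟪b.repr.symm xx, y₀ - x₀⟫ := by simp [hg, hzero y₀ hyf]
      have h4 := hbound y₀ hy₀cl
      rw [h2, h3] at h1
      have : u x₀ = -μ := by rw [hμ']; ring
      linarith
    refine Set.mem_iUnion₂.mpr ⟨y₀, hy₀Ω, ?_⟩
    intro y hy
    have hmin := hy₀min (subset_closure hy)
    simp only [hg, Set.mem_setOf_eq] at hmin
    have hinner3 : ⟪b.repr.symm xx, y - x₀⟫ - ⟪b.repr.symm xx, y₀ - x₀⟫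
        = ⟪b.repr.symm xx, y - y₀⟫ := by
      rw [← inner_sub_right]
      congr 1
      abel
    linarith
  -- volume chain
  have hBmeas : MeasurableSet B := hB'meas.preimage (MeasurableEquiv.toLp 2 (Fin n → ℝ)).symm.measurable
  have hvolS : volume S = volume B := by
    rw [hS, b.repr.symm.image_eq_preimage_symm B, LinearIsometryEquiv.symm_symm]
    exact b.measurePreserving_repr.measure_preimage hBmeas.nullMeasurableSet
  have hvol : ENNReal.ofReal a * ENNReal.ofReal r ^ k ≤ MAvol Ω u Ω := by
    rw [← hvolB, ← hvolS]
    exact measure_mono hSsub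
  rw [habs]
  have hreal : c * d * D ^ k * (a * r ^ k) = μ ^ n := by
    have hμn : μ ^ n = μ * μ ^ k := by rw [hnk, pow_succ]; ring
    have h4n : (4 * (n:ℝ)) ≠ 0 := by positivity
    rw [hμn, hc, ha', hr', div_pow, mul_pow]
    field_simp
    ring
  calc ENNReal.ofReal (μ ^ n)
      = ENNReal.ofReal (c * d * D ^ k * (a * r ^ k)) := by rw [hreal]
    _ = ENNReal.ofReal (c * d * D ^ k) * ENNReal.ofReal (a * r ^ k) := by
        rw [ENNReal.ofReal_mul (by positivity)]
    _ = ENNReal.ofReal (c * d * D ^ k) * (ENNReal.ofReal a * ENNReal.ofReal r ^ k) := by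
        rw [ENNReal.ofReal_mul hapos.le, ENNReal.ofReal_pow hrpos.le]
    _ ≤ ENNReal.ofReal (c * d * D ^ k) * MAvol Ω u Ω := mul_le_mul_right hvol _
end

section
/- Let Ω ⊆ ℝ^n be a bounded open convex set and let u_k : Ω → ℝ be convex functions converging locally uniformly in Ω to a function u. Then u is convex and the Monge–Ampère measures Mu_k converge weakly to Mu in Ω, i.e. ∫_Ω φ dMu_k → ∫_Ω φ dMu for every continuous function φ with compact support in Ω. -/
open MeasureTheory
open scoped RealInnerProductSpace ENNReal

/-- `μ` represents the Monge–Ampère measure of `v` (relative to `Ω`) on Borel subsets of `Ω`. -/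
def IsMAMeasureOn {n : ℕ} (Ω : Set (EuclideanSpace ℝ (Fin n)))
    (v : EuclideanSpace ℝ (Fin n) → ℝ) (μ : Measure (EuclideanSpace ℝ (Fin n))) : Prop :=
  ∀ E ⊆ Ω, MeasurableSet E → μ E = MAvol Ω v E

section Aux
open Metric Set Filter

variable {n : ℕ} {Ω : Set (EuclideanSpace ℝ (Fin n))}

lemma mem_subgradientsOn {w : EuclideanSpace ℝ (Fin n) → ℝ} {E : Set (EuclideanSpace ℝ (Fin n))}
    {p : EuclideanSpace ℝ (Fin n)} :
    p ∈ subgradientsOn Ω w E ↔ ∃ x ∈ E, ∀ y ∈ Ω, w x + ⟪p, y - x⟫ ≤ w y := by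
  simp [subgradientsOn]

lemma subgradientsOn_mono {w : EuclideanSpace ℝ (Fin n) → ℝ}
    {E F : Set (EuclideanSpace ℝ (Fin n))} (h : E ⊆ F) :
    subgradientsOn Ω w E ⊆ subgradientsOn Ω w F := by
  intro p hp
  rcases mem_subgradientsOn.1 hp with ⟨x, hx, hs⟩
  exact mem_subgradientsOn.2 ⟨x, h hx, hs⟩

lemma isClosed_subgradientsOn {w : EuclideanSpace ℝ (Fin n) → ℝ}
    {K : Set (EuclideanSpace ℝ (Fin n))} (hK : IsCompact K) (hKΩ : K ⊆ Ω)
    (hw : ContinuousOn w Ω) (hΩ : IsOpen Ω) :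
    IsClosed (subgradientsOn Ω w K) := by
  have hset : subgradientsOn Ω w K =
      {p : EuclideanSpace ℝ (Fin n) | ∃ x ∈ K, ∀ y ∈ Ω, w x + ⟪p, y - x⟫ ≤ w y} := by
    ext p; exact mem_subgradientsOn
  rw [hset]
  apply IsSeqClosed.isClosed
  intro ps p hps hlim
  choose xs hxs hsub using hps
  obtain ⟨x, hxK, ψ, hψ, hxlim⟩ := hK.tendsto_subseq hxs
  refine ⟨x, hxK, fun y hy => ?_⟩
  have h1 : Filter.Tendsto (fun j => w (xs (ψ j)) + ⟪ps (ψ j), y - xs (ψ j)⟫)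
      Filter.atTop (nhds (w x + ⟪p, y - x⟫)) := by
    apply Filter.Tendsto.add
    · exact ((hw.continuousAt (hΩ.mem_nhds (hKΩ hxK))).tendsto.comp hxlim)
    · exact Filter.Tendsto.inner ((hlim.comp hψ.tendsto_atTop)) (tendsto_const_nhds.sub hxlim)
  exact le_of_tendsto h1 (Filter.Eventually.of_forall fun j => hsub (ψ j) y hy)

lemma subgradientsOn_subset_closedBall {w : EuclideanSpace ℝ (Fin n) → ℝ}
    {K : Set (EuclideanSpace ℝ (Fin n))} {δ m M : ℝ} (hδ : 0 < δ)
    (hthick : cthickening δ K ⊆ Ω)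
    (hm : ∀ x ∈ cthickening δ K, m ≤ w x) (hM : ∀ x ∈ cthickening δ K, w x ≤ M) :
    subgradientsOn Ω w K ⊆ closedBall 0 ((M - m)/δ) := by
  intro p hp
  rcases mem_subgradientsOn.1 hp with ⟨x, hx, hsub⟩
  rw [mem_closedBall, dist_zero_right]
  have hxth : x ∈ cthickening δ K := self_subset_cthickening K hx
  rcases eq_or_ne p 0 with rfl | hp0
  · have : m ≤ M := le_trans (hm x hxth) (hM x hxth)
    simp only [norm_zero]
    apply div_nonneg (by linarith) hδ.le
  · have hpn : 0 < ‖p‖ := norm_pos_iff.2 hp0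
    set y : EuclideanSpace ℝ (Fin n) := x + (δ/‖p‖) • p with hy
    have hyth : y ∈ cthickening δ K := by
      apply mem_cthickening_of_dist_le y x δ K hx
      have : dist y x = δ := by
        rw [hy, dist_eq_norm, add_sub_cancel_left, norm_smul]
        rw [Real.norm_eq_abs, abs_of_pos (by positivity)]
        field_simp
      linarith [this.le]
    have h2 := hsub y (hthick hyth)
    have h3 : ⟪p, y - x⟫ = δ * ‖p‖ := by
      rw [hy, add_sub_cancel_left, real_inner_smul_right, real_inner_self_eq_norm_sq]
      field_simp
    have := hm x hxth
    have := hM y hyth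
    rw [h3] at h2
    rw [le_div_iff₀ hδ]
    nlinarith

/-- Finiteness of the Monge-Ampère volume of a compact set. -/
lemma MAvol_lt_top {w : EuclideanSpace ℝ (Fin n) → ℝ}
    {K : Set (EuclideanSpace ℝ (Fin n))} (hK : IsCompact K) (hKΩ : K ⊆ Ω)
    (hw : ContinuousOn w Ω) (hΩ : IsOpen Ω) :
    volume (subgradientsOn Ω w K) < ⊤ := by
  rcases K.eq_empty_or_nonempty with rfl | hne
  · simp [subgradientsOn]
  obtain ⟨δ, hδ, hthick⟩ := hK.exists_cthickening_subset_open hΩ hKΩ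
  have hK' : IsCompact (cthickening δ K) := hK.cthickening
  have hK'ne : (cthickening δ K).Nonempty := hne.mono (self_subset_cthickening K)
  have hwc : ContinuousOn w (cthickening δ K) := hw.mono hthick
  obtain ⟨a, _, hmin⟩ := hK'.exists_isMinOn hK'ne hwc
  obtain ⟨b, _, hmax⟩ := hK'.exists_isMaxOn hK'ne hwc
  have hsub := subgradientsOn_subset_closedBall (w := w) hδ hthick
      (fun x hx => isMinOn_iff.1 hmin x hx) (fun x hx => isMaxOn_iff.1 hmax x hx)
  exact lt_of_le_of_lt (measure_mono hsub) measure_closedBall_lt_top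

/-- Eventually-uniform bound on subgradient sets of `u k` over a compact set. -/
lemma eventual_ball (hΩopen : IsOpen Ω)
    {u : ℕ → EuclideanSpace ℝ (Fin n) → ℝ} {v : EuclideanSpace ℝ (Fin n) → ℝ}
    (hv : ContinuousOn v Ω)
    (hconv : TendstoLocallyUniformlyOn u v Filter.atTop Ω)
    {K : Set (EuclideanSpace ℝ (Fin n))} (hK : IsCompact K) (hKΩ : K ⊆ Ω) :
    ∃ R : ℝ, ∀ᶠ k in Filter.atTop, subgradientsOn Ω (u k) K ⊆ closedBall 0 R := by
  rcases K.eq_empty_or_nonempty with rfl | hne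
  · exact ⟨0, Filter.Eventually.of_forall fun k => by simp [subgradientsOn]⟩
  obtain ⟨δ, hδ, hthick⟩ := hK.exists_cthickening_subset_open hΩopen hKΩ
  have hK' : IsCompact (cthickening δ K) := hK.cthickening
  have hK'ne : (cthickening δ K).Nonempty := hne.mono (self_subset_cthickening K)
  have hwc : ContinuousOn v (cthickening δ K) := hv.mono hthick
  obtain ⟨a, _, hmin⟩ := hK'.exists_isMinOn hK'ne hwc
  obtain ⟨b, _, hmax⟩ := hK'.exists_isMaxOn hK'ne hwc
  have huC : TendstoUniformlyOn u v Filter.atTop (cthickening δ K) :=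
    (tendstoLocallyUniformlyOn_iff_tendstoUniformlyOn_of_compact hK').mp (hconv.mono hthick)
  rw [Metric.tendstoUniformlyOn_iff] at huC
  refine ⟨(v b + 1 - (v a - 1))/δ, ?_⟩
  filter_upwards [huC 1 one_pos] with k hk
  apply subgradientsOn_subset_closedBall hδ hthick
  · intro x hx
    have h1 := hk x hx
    rw [Real.dist_eq, abs_lt] at h1
    have := isMinOn_iff.1 hmin x hx
    linarith
  · intro x hx
    have h1 := hk x hx
    rw [Real.dist_eq, abs_lt] at h1
    have := isMaxOn_iff.1 hmax x hx
    linarith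

end Aux

section Aux2
open Metric Set Filter

variable {n : ℕ} {Ω : Set (EuclideanSpace ℝ (Fin n))}

lemma convexOn_limit (hΩconv : Convex ℝ Ω)
    {u : ℕ → EuclideanSpace ℝ (Fin n) → ℝ} {v : EuclideanSpace ℝ (Fin n) → ℝ}
    (hcv : ∀ k, ConvexOn ℝ Ω (u k))
    (hconv : TendstoLocallyUniformlyOn u v Filter.atTop Ω) :
    ConvexOn ℝ Ω v := by
  refine ⟨hΩconv, fun x hx y hy a b ha hb hab => ?_⟩
  have h1 := hconv.tendsto_at (hΩconv hx hy ha hb hab)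
  have h2 : Filter.Tendsto (fun k => a * u k x + b * u k y) Filter.atTop
      (nhds (a * v x + b * v y)) :=
    ((hconv.tendsto_at hx).const_mul a).add ((hconv.tendsto_at hy).const_mul b)
  exact le_of_tendsto_of_tendsto' h1 h2 fun k => (hcv k).2 hx hy ha hb hab

lemma iInter_subset_subgradients (hΩ : IsOpen Ω)
    {u : ℕ → EuclideanSpace ℝ (Fin n) → ℝ} {v : EuclideanSpace ℝ (Fin n) → ℝ}
    (hv : ContinuousOn v Ω)
    (hconv : TendstoLocallyUniformlyOn u v Filter.atTop Ω)
    {K : Set (EuclideanSpace ℝ (Fin n))} (hK : IsCompact K) (hKΩ : K ⊆ Ω) :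
    (⋂ N, ⋃ k, ⋃ (_ : N ≤ k), subgradientsOn Ω (u k) K) ⊆ subgradientsOn Ω v K := by
  intro p hp
  simp only [Set.mem_iInter, Set.mem_iUnion] at hp
  have hfreq : ∃ᶠ k in Filter.atTop, ∃ x ∈ K, ∀ y ∈ Ω, u k x + ⟪p, y - x⟫ ≤ u k y := by
    rw [Filter.frequently_atTop]
    intro N
    obtain ⟨k, hk, hmem⟩ := hp N
    exact ⟨k, hk, mem_subgradientsOn.1 hmem⟩
  obtain ⟨ψ, hψ, hP⟩ := Filter.extraction_of_frequently_atTop hfreq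
  choose xs hxs hsub using hP
  obtain ⟨x, hxK, θ, hθ, hxlim⟩ := hK.tendsto_subseq hxs
  have huK : TendstoUniformlyOn u v Filter.atTop K :=
    (tendstoLocallyUniformlyOn_iff_tendstoUniformlyOn_of_compact hK).mp (hconv.mono hKΩ)
  refine mem_subgradientsOn.2 ⟨x, hxK, fun y hy => ?_⟩
  have hmono : StrictMono (fun j => ψ (θ j)) := hψ.comp hθ
  have htend1 : Filter.Tendsto (fun j => u (ψ (θ j)) (xs (θ j))) Filter.atTop (nhds (v x)) := by
    have hA : Filter.Tendsto (fun j => u (ψ (θ j)) (xs (θ j)) - v (xs (θ j)))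
        Filter.atTop (nhds 0) := by
      rw [Metric.tendsto_atTop]
      intro ε hε
      rw [Metric.tendstoUniformlyOn_iff] at huK
      obtain ⟨N, hN⟩ := Filter.eventually_atTop.1 (huK ε hε)
      refine ⟨N, fun j hj => ?_⟩
      have := hN (ψ (θ j)) (le_trans hj (hmono.le_apply)) (xs (θ j)) (hxs (θ j))
      rw [Real.dist_eq] at this ⊢
      rw [abs_sub_comm] at this
      simpa using this
    have hB : Filter.Tendsto (fun j => v (xs (θ j))) Filter.atTop (nhds (v x)) :=
      (hv.continuousAt (hΩ.mem_nhds (hKΩ hxK))).tendsto.comp hxlim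
    have := hA.add hB
    simpa using this
  have htend2 : Filter.Tendsto (fun j => u (ψ (θ j)) y) Filter.atTop (nhds (v y)) :=
    (hconv.tendsto_at hy).comp (hmono.tendsto_atTop)
  have htend3 : Filter.Tendsto (fun j => u (ψ (θ j)) (xs (θ j)) + ⟪p, y - xs (θ j)⟫)
      Filter.atTop (nhds (v x + ⟪p, y - x⟫)) :=
    htend1.add (Filter.Tendsto.inner tendsto_const_nhds (tendsto_const_nhds.sub hxlim))
  exact le_of_tendsto_of_tendsto' htend3 htend2 fun j => hsub (θ j) y hy

/-- Fact 1: upper semicontinuity of MA measures on compact sets. -/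
lemma fact1 (hΩ : IsOpen Ω)
    {u : ℕ → EuclideanSpace ℝ (Fin n) → ℝ} {v : EuclideanSpace ℝ (Fin n) → ℝ}
    (hu : ∀ k, ContinuousOn (u k) Ω) (hv : ContinuousOn v Ω)
    (hconv : TendstoLocallyUniformlyOn u v Filter.atTop Ω)
    {K : Set (EuclideanSpace ℝ (Fin n))} (hK : IsCompact K) (hKΩ : K ⊆ Ω) :
    Filter.limsup (fun k => volume (subgradientsOn Ω (u k) K)) Filter.atTop
      ≤ volume (subgradientsOn Ω v K) := by
  set B : ℕ → Set (EuclideanSpace ℝ (Fin n)) :=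
    fun N => ⋃ k, ⋃ (_ : N ≤ k), subgradientsOn Ω (u k) K with hB
  have hmeas : ∀ N, MeasurableSet (B N) := by
    intro N
    exact MeasurableSet.iUnion fun k => MeasurableSet.iUnion fun _ =>
      (isClosed_subgradientsOn hK hKΩ (hu k) hΩ).measurableSet
  have hanti : Antitone B := by
    intro N M hNM
    apply Set.iUnion₂_subset
    intro k hk
    exact Set.subset_iUnion₂ (s := fun k (_ : N ≤ k) => subgradientsOn Ω (u k) K) k (le_trans hNM hk)
  have hfin : ∃ N, volume (B N) ≠ ⊤ := by
    obtain ⟨R, hR⟩ := eventual_ball hΩ hv hconv hK hKΩ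
    obtain ⟨N, hN⟩ := Filter.eventually_atTop.1 hR
    refine ⟨N, ?_⟩
    have : B N ⊆ closedBall 0 R := Set.iUnion₂_subset fun k hk => hN k hk
    exact (lt_of_le_of_lt (measure_mono this) measure_closedBall_lt_top).ne
  have htend := tendsto_measure_iInter_atTop (fun N => (hmeas N).nullMeasurableSet) hanti hfin
  have h1 : Filter.limsup (fun k => volume (subgradientsOn Ω (u k) K)) Filter.atTop
      ≤ Filter.limsup (fun N => volume (B N)) Filter.atTop := by
    refine Filter.limsup_le_limsup (Filter.Eventually.of_forall fun k =>
      measure_mono (Set.subset_iUnion₂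
        (s := fun j (_ : k ≤ j) => subgradientsOn Ω (u j) K) k le_rfl)) ?_ ?_
    · isBoundedDefault
    · isBoundedDefault
  have h2 : Filter.limsup (fun N => volume (B N)) Filter.atTop = volume (⋂ N, B N) :=
    htend.limsup_eq
  have h3 : volume (⋂ N, B N) ≤ volume (subgradientsOn Ω v K) :=
    measure_mono (iInter_subset_subgradients hΩ hv hconv hK hKΩ)
  calc Filter.limsup (fun k => volume (subgradientsOn Ω (u k) K)) Filter.atTop
      ≤ Filter.limsup (fun N => volume (B N)) Filter.atTop := h1
  _ = volume (⋂ N, B N) := h2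
  _ ≤ volume (subgradientsOn Ω v K) := h3

end Aux2

section Aux3
open Metric Set Filter

variable {n : ℕ} {Ω : Set (EuclideanSpace ℝ (Fin n))}

-- subgradient at a differentiability point of a function with global affine minorant touching
lemma subgrad_eq_of_differentiable {g : EuclideanSpace ℝ (Fin n) → ℝ}
    {p x : EuclideanSpace ℝ (Fin n)}
    (hmin : ∀ q, g p + ⟪q - p, x⟫ ≤ g q) (hd : DifferentiableAt ℝ g p) :
    fderiv ℝ g p = innerSL ℝ x := by
  set f : EuclideanSpace ℝ (Fin n) → ℝ := fun q => g q - ⟪x, q⟫ with hf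
  have hdf : DifferentiableAt ℝ f p := hd.sub ((innerSL ℝ x).differentiableAt)
  have hlm : IsLocalMin f p := by
    apply Filter.Eventually.of_forall
    intro q
    have := hmin q
    have h2 : ⟪q - p, x⟫ = ⟪x, q⟫ - ⟪x, p⟫ := by
      rw [real_inner_comm, inner_sub_right]
    simp only [hf]
    linarith [this, h2.symm.le]
  have h0 := hlm.fderiv_eq_zero
  have hD : HasFDerivAt f (fderiv ℝ g p - innerSL ℝ x) p :=
    hd.hasFDerivAt.sub (innerSL ℝ x).hasFDerivAt
  have h1 : fderiv ℝ f p = fderiv ℝ g p - innerSL ℝ x := hD.fderiv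
  rw [h1] at h0
  rwa [sub_eq_zero] at h0

lemma nullset_two_point (Ω : Set (EuclideanSpace ℝ (Fin n)))
    (hΩbd : Bornology.IsBounded Ω) (v : EuclideanSpace ℝ (Fin n) → ℝ) :
    volume {p : EuclideanSpace ℝ (Fin n) | ∃ x ∈ Ω, ∃ y ∈ Ω, x ≠ y ∧
      (∀ z ∈ Ω, v x + ⟪p, z - x⟫ ≤ v z) ∧ (∀ z ∈ Ω, v y + ⟪p, z - y⟫ ≤ v z)} = 0 := by
  set S := {p : EuclideanSpace ℝ (Fin n) | ∃ x ∈ Ω, ∃ y ∈ Ω, x ≠ y ∧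
      (∀ z ∈ Ω, v x + ⟪p, z - x⟫ ≤ v z) ∧ (∀ z ∈ Ω, v y + ⟪p, z - y⟫ ≤ v z)} with hS
  rcases Set.eq_empty_or_nonempty S with h | ⟨p₀, hp₀⟩
  · simp [h]
  obtain ⟨x₀, hx₀, -, -, -, hsub₀, -⟩ := hp₀
  obtain ⟨R, hR⟩ := hΩbd.subset_closedBall 0
  -- the Legendre-type transform
  set g : EuclideanSpace ℝ (Fin n) → ℝ := fun p => sSup ((fun z => ⟪p, z⟫ - v z) '' Ω) with hg
  have hne : Ω.Nonempty := ⟨x₀, hx₀⟩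
  have hub : ∀ p z, z ∈ Ω → ⟪p, z⟫ - v z ≤ ‖p‖ * R + (‖p₀‖ * (R + ‖x₀‖) - v x₀) := by
    intro p z hz
    have h1 : ⟪p, z⟫ ≤ ‖p‖ * R := by
      calc ⟪p, z⟫ ≤ ‖p‖ * ‖z‖ := real_inner_le_norm p z
      _ ≤ ‖p‖ * R := by
          have := hR hz
          rw [Metric.mem_closedBall, dist_zero_right] at this
          exact mul_le_mul_of_nonneg_left this (norm_nonneg p)
    have h2 : v x₀ + ⟪p₀, z - x₀⟫ ≤ v z := hsub₀ z hz
    have h3 : -(‖p₀‖ * (R + ‖x₀‖)) ≤ ⟪p₀, z - x₀⟫ := by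
      have := real_inner_le_norm p₀ (x₀ - z)
      have h4 : ‖x₀ - z‖ ≤ R + ‖x₀‖ := by
        have := hR hz
        rw [Metric.mem_closedBall, dist_zero_right] at this
        calc ‖x₀ - z‖ ≤ ‖x₀‖ + ‖z‖ := norm_sub_le _ _
        _ ≤ R + ‖x₀‖ := by linarith
      have h5 : ⟪p₀, x₀ - z⟫ ≤ ‖p₀‖ * (R + ‖x₀‖) :=
        le_trans this (mul_le_mul_of_nonneg_left h4 (norm_nonneg p₀))
      have h6 : ⟪p₀, z - x₀⟫ = -⟪p₀, x₀ - z⟫ := by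
        rw [← inner_neg_right]; congr 1; abel
      linarith
    linarith
  have hbdd : ∀ p, BddAbove ((fun z => ⟪p, z⟫ - v z) '' Ω) := by
    intro p
    refine ⟨‖p‖ * R + (‖p₀‖ * (R + ‖x₀‖) - v x₀), ?_⟩
    rintro t ⟨z, hz, rfl⟩
    exact hub p z hz
  -- value of g at subgradient points
  have hval : ∀ p x, x ∈ Ω → (∀ z ∈ Ω, v x + ⟪p, z - x⟫ ≤ v z) → g p = ⟪p, x⟫ - v x := by
    intro p x hx hsub
    apply le_antisymm
    · apply csSup_le (hne.image _)
      rintro t ⟨z, hz, rfl⟩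
      dsimp only
      have := hsub z hz
      rw [inner_sub_right] at this
      linarith
    · exact le_csSup (hbdd p) ⟨x, hx, rfl⟩
  -- global subgradient property of g
  have hgsub : ∀ p x, x ∈ Ω → (∀ z ∈ Ω, v x + ⟪p, z - x⟫ ≤ v z) →
      ∀ q, g p + ⟪q - p, x⟫ ≤ g q := by
    intro p x hx hsub q
    have h1 : g p = ⟪p, x⟫ - v x := hval p x hx hsub
    have h2 : ⟪q, x⟫ - v x ≤ g q := le_csSup (hbdd q) ⟨x, hx, rfl⟩
    have h3 : ⟪q - p, x⟫ = ⟪q, x⟫ - ⟪p, x⟫ := inner_sub_left q p x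
    linarith
  -- g is Lipschitz
  have hR0 : 0 ≤ R := by
    have := hR hx₀
    rw [Metric.mem_closedBall, dist_zero_right] at this
    linarith [norm_nonneg x₀]
  have hlip : LipschitzWith (Real.toNNReal R) g := by
    apply LipschitzWith.of_dist_le_mul
    intro p q
    rw [Real.dist_eq, Real.coe_toNNReal R hR0, abs_sub_le_iff]
    have key : ∀ p q : EuclideanSpace ℝ (Fin n), g p - g q ≤ R * dist p q := by
      intro p q
      rw [sub_le_iff_le_add]
      apply csSup_le (hne.image _)
      rintro t ⟨z, hz, rfl⟩
      dsimp only
      have h1 : ⟪q, z⟫ - v z ≤ g q := le_csSup (hbdd q) ⟨z, hz, rfl⟩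
      have h2 : ⟪p, z⟫ - ⟪q, z⟫ ≤ R * dist p q := by
        rw [← inner_sub_left]
        calc ⟪p - q, z⟫ ≤ ‖p - q‖ * ‖z‖ := real_inner_le_norm _ _
        _ ≤ R * dist p q := by
            have hz' := hR hz
            rw [Metric.mem_closedBall, dist_zero_right] at hz'
            rw [dist_eq_norm]
            calc ‖p - q‖ * ‖z‖ ≤ ‖p - q‖ * R :=
                  mul_le_mul_of_nonneg_left hz' (norm_nonneg _)
            _ = R * ‖p - q‖ := mul_comm _ _
      linarith
    exact ⟨key p q, by rw [dist_comm]; exact key q p⟩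
  have hdiff : ∀ᵐ p : EuclideanSpace ℝ (Fin n) ∂volume, DifferentiableAt ℝ g p :=
    hlip.ae_differentiableAt
  rw [MeasureTheory.ae_iff] at hdiff
  apply measure_mono_null _ hdiff
  intro p hp
  simp only [Set.mem_setOf_eq] at hp ⊢
  rintro hd
  obtain ⟨x, hx, y, hy, hxy, hsx, hsy⟩ := hp
  have h1 := subgrad_eq_of_differentiable (hgsub p x hx hsx) hd
  have h2 := subgrad_eq_of_differentiable (hgsub p y hy hsy) hd
  apply hxy
  have : innerSL ℝ x = innerSL ℝ y := h1 ▸ h2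
  have h3 : ⟪x - y, x - y⟫ = 0 := by
    have hx' := congrFun (congrArg DFunLike.coe this) (x - y)
    simp only [innerSL_apply_apply] at hx'
    rw [inner_sub_left, hx', ← inner_sub_left]
    simp
  rwa [inner_self_eq_zero, sub_eq_zero] at h3


lemma exists_frontier_mem_segment {U : Set (EuclideanSpace ℝ (Fin n))} (hU : IsOpen U)
    {y z : EuclideanSpace ℝ (Fin n)} (hy : y ∈ U) (hz : z ∉ closure U) :
    ∃ t : ℝ, 0 < t ∧ t ≤ 1 ∧ (1 - t) • y + t • z ∈ frontier U := by
  have hseg : IsPreconnected (segment ℝ y z) := (convex_segment y z).isPreconnected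
  by_contra hcon
  push_neg at hcon
  have hcover : segment ℝ y z ⊆ U ∪ (closure U)ᶜ := by
    intro w hw
    rcases Classical.em (w ∈ closure U) with h | h
    · left
      by_contra hwU
      have hwf : w ∈ frontier U := by
        rw [hU.frontier_eq]; exact ⟨h, hwU⟩
      obtain ⟨a, b, ha, hb, hab, rfl⟩ := hw
      have hb' : 0 < b := by
        rcases lt_or_eq_of_le hb with h' | h'
        · exact h'
        · exfalso
          apply hwU
          have : a = 1 := by linarith
          simpa [this, ← h'] using hy
      have : a • y + b • z = (1 - b) • y + b • z := by
        rw [show a = 1 - b by linarith]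
      rw [this] at hwf
      exact absurd hwf (hcon b hb' (by linarith))
    · right; exact h
  have hdisj : Disjoint U (closure U)ᶜ :=
    Set.disjoint_compl_right_iff_subset.2 subset_closure
  rcases hseg.subset_or_subset hU (isClosed_closure.isOpen_compl) hdisj hcover with h | h
  · exact hz (subset_closure (h (right_mem_segment ℝ y z)))
  · exact (h (left_mem_segment ℝ y z)) (subset_closure hy)

lemma eventually_subgrad
    (hΩopen : IsOpen Ω)
    {u : ℕ → EuclideanSpace ℝ (Fin n) → ℝ} {v : EuclideanSpace ℝ (Fin n) → ℝ}
    (hcv : ∀ k, ConvexOn ℝ Ω (u k)) (hv : ContinuousOn v Ω)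
    (hconv : TendstoLocallyUniformlyOn u v Filter.atTop Ω)
    {U : Set (EuclideanSpace ℝ (Fin n))} (hU : IsOpen U)
    (hUc : IsCompact (closure U)) (hUΩ : closure U ⊆ Ω)
    {p x₀ : EuclideanSpace ℝ (Fin n)} (hx₀ : x₀ ∈ U)
    (hsub : ∀ z ∈ Ω, v x₀ + ⟪p, z - x₀⟫ ≤ v z)
    (huniq : ∀ z ∈ Ω, z ≠ x₀ → ¬(∀ w ∈ Ω, v z + ⟪p, w - z⟫ ≤ v w)) :
    ∀ᶠ k in Filter.atTop, p ∈ subgradientsOn Ω (u k) U := by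
  have hx₀Ω : x₀ ∈ Ω := hUΩ (subset_closure hx₀)
  set ℓ : EuclideanSpace ℝ (Fin n) → ℝ := fun z => v x₀ + ⟪p, z - x₀⟫ with hℓ
  have hℓcont : Continuous ℓ := by
    apply continuous_const.add
    exact (continuous_const.inner (continuous_id.sub continuous_const))
  -- strict inequality away from x₀
  have hstrict : ∀ z ∈ Ω, z ≠ x₀ → ℓ z < v z := by
    intro z hz hzx
    rcases lt_or_eq_of_le (hsub z hz) with h | h
    · exact h
    · exfalso
      apply huniq z hz hzx
      intro w hw
      have h1 := hsub w hw
      have h2 : ⟪p, z - x₀⟫ + ⟪p, w - z⟫ = ⟪p, w - x₀⟫ := by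
        rw [← inner_add_right]
        congr 1
        abel
      linarith [h2, h1, h]
  -- ε on the frontier
  obtain ⟨ε, hε, hfr⟩ : ∃ ε : ℝ, 0 < ε ∧ ∀ w ∈ frontier U, ε ≤ v w - ℓ w := by
    rcases (frontier U).eq_empty_or_nonempty with h | h
    · exact ⟨1, one_pos, by simp [h]⟩
    · have hfrc : IsCompact (frontier U) := by
        apply hUc.of_isClosed_subset isClosed_frontier
        rw [hU.frontier_eq]; exact Set.diff_subset
      have hfrΩ : frontier U ⊆ Ω := fun w hw => hUΩ (by rw [hU.frontier_eq] at hw; exact hw.1)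
      have hcont : ContinuousOn (fun w => v w - ℓ w) (frontier U) :=
        (hv.mono hfrΩ).sub hℓcont.continuousOn
      obtain ⟨w₀, hw₀, hmin⟩ := hfrc.exists_isMinOn h hcont
      refine ⟨v w₀ - ℓ w₀, ?_, fun w hw => hmin hw⟩
      have hw₀Ω : w₀ ∈ Ω := hfrΩ hw₀
      have hw₀x : w₀ ≠ x₀ := by
        intro hcon
        rw [hU.frontier_eq] at hw₀
        exact hw₀.2 (hcon ▸ hx₀)
      linarith [hstrict w₀ hw₀Ω hw₀x]
  -- uniform convergence on closure U
  have huC : TendstoUniformlyOn u v Filter.atTop (closure U) :=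
    (tendstoLocallyUniformlyOn_iff_tendstoUniformlyOn_of_compact hUc).mp (hconv.mono hUΩ)
  rw [Metric.tendstoUniformlyOn_iff] at huC
  filter_upwards [huC (ε/3) (by linarith)] with k hk
  -- minimize u k - ℓ over closure U
  have hCne : (closure U).Nonempty := ⟨x₀, subset_closure hx₀⟩
  have hucont : ContinuousOn (fun z => u k z - ℓ z) (closure U) :=
    ((hcv k).continuousOn hΩopen |>.mono hUΩ).sub hℓcont.continuousOn
  obtain ⟨y, hyC, hymin⟩ := hUc.exists_isMinOn hCne hucont
  have hyΩ : y ∈ Ω := hUΩ hyC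
  -- y is in U
  have hyU : y ∈ U := by
    by_contra hyU
    have hyfr : y ∈ frontier U := by rw [hU.frontier_eq]; exact ⟨hyC, hyU⟩
    have h1 : u k y - ℓ y ≤ u k x₀ - ℓ x₀ := hymin (subset_closure hx₀)
    have h2 : ℓ x₀ = v x₀ := by simp [hℓ]
    have h3 : dist (v x₀) (u k x₀) < ε/3 := hk x₀ (subset_closure hx₀)
    have h4 : dist (v y) (u k y) < ε/3 := hk y hyC
    rw [Real.dist_eq, abs_lt] at h3 h4
    have h5 := hfr y hyfr
    linarith
  -- subgradient property at y over all of Ω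
  have hsubk : ∀ z ∈ Ω, u k y + ⟪p, z - y⟫ ≤ u k z := by
    have hkey : ∀ z ∈ closure U, u k y + ⟪p, z - y⟫ ≤ u k z := by
      intro z hz
      have h1 : u k y - ℓ y ≤ u k z - ℓ z := hymin hz
      have h2 : ℓ z - ℓ y = ⟪p, z - y⟫ := by
        simp only [hℓ]
        have : ⟪p, z - x₀⟫ - ⟪p, y - x₀⟫ = ⟪p, z - y⟫ := by
          rw [← inner_sub_right]; congr 1; abel
        linarith
      linarith
    intro z hz
    rcases Classical.em (z ∈ closure U) with h | h
    · exact hkey z h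
    · obtain ⟨t, ht0, ht1, hw⟩ := exists_frontier_mem_segment hU hyU h
      set w := (1 - t) • y + t • z with hwdef
      have hwC : w ∈ closure U := by
        rw [hU.frontier_eq] at hw
        exact hw.1
      have h1 : u k y + ⟪p, w - y⟫ ≤ u k w := hkey w hwC
      have h2 : u k w ≤ (1 - t) * u k y + t * u k z :=
        (hcv k).2 hyΩ hz (by linarith) (le_of_lt ht0) (by ring)
      have h3 : ⟪p, w - y⟫ = t * ⟪p, z - y⟫ := by
        have : w - y = t • (z - y) := by
          rw [hwdef]
          rw [smul_sub, sub_smul, one_smul]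
          abel
        rw [this, real_inner_smul_right]
      rw [h3] at h1
      have h4 : t * (u k y + ⟪p, z - y⟫) ≤ t * u k z := by nlinarith
      exact le_of_mul_le_mul_left h4 ht0
  rw [subgradientsOn]
  simp only [Set.mem_iUnion, Set.mem_setOf_eq]
  exact ⟨y, hyU, hsubk⟩

end Aux3

section Aux4
open Metric Set Filter

variable {n : ℕ} {Ω : Set (EuclideanSpace ℝ (Fin n))}

/-- Fact 2: lower semicontinuity of MA measures on open sets with compact closure. -/
lemma fact2 (hΩopen : IsOpen Ω) (hΩbd : Bornology.IsBounded Ω)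
    {u : ℕ → EuclideanSpace ℝ (Fin n) → ℝ} {v : EuclideanSpace ℝ (Fin n) → ℝ}
    (hcv : ∀ k, ConvexOn ℝ Ω (u k)) (hv : ContinuousOn v Ω)
    (hconv : TendstoLocallyUniformlyOn u v Filter.atTop Ω)
    {U : Set (EuclideanSpace ℝ (Fin n))} (hU : IsOpen U)
    (hUc : IsCompact (closure U)) (hUΩ : closure U ⊆ Ω) :
    volume (subgradientsOn Ω v U) ≤
      Filter.liminf (fun k => volume (subgradientsOn Ω (u k) U)) Filter.atTop := by
  set S := {p : EuclideanSpace ℝ (Fin n) | ∃ x ∈ Ω, ∃ y ∈ Ω, x ≠ y ∧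
      (∀ z ∈ Ω, v x + ⟪p, z - x⟫ ≤ v z) ∧ (∀ z ∈ Ω, v y + ⟪p, z - y⟫ ≤ v z)} with hSdef
  have hSnull : volume S = 0 := nullset_two_point Ω hΩbd v
  set A : ℕ → Set (EuclideanSpace ℝ (Fin n)) :=
    fun N => ⋂ k, ⋂ (_ : N ≤ k), subgradientsOn Ω (u k) U with hA
  have hmono : Monotone A := by
    intro N M hNM
    apply Set.subset_iInter₂
    intro k hk
    exact Set.iInter₂_subset (s := fun k (_ : N ≤ k) => subgradientsOn Ω (u k) U)
      k (le_trans hNM hk)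
  have hcover : subgradientsOn Ω v U ⊆ (⋃ N, A N) ∪ S := by
    intro p hp
    rcases mem_subgradientsOn.1 hp with ⟨x₀, hx₀U, hsub⟩
    by_cases hpS : p ∈ S
    · right; exact hpS
    · left
      have huniq : ∀ z ∈ Ω, z ≠ x₀ → ¬(∀ w ∈ Ω, v z + ⟪p, w - z⟫ ≤ v w) := by
        intro z hz hzx hcon
        exact hpS ⟨z, hz, x₀, hUΩ (subset_closure hx₀U), hzx, hcon, hsub⟩
      have hev := eventually_subgrad hΩopen hcv hv hconv hU hUc hUΩ hx₀U hsub huniq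
      obtain ⟨N, hN⟩ := Filter.eventually_atTop.1 hev
      exact Set.mem_iUnion.2 ⟨N, Set.mem_iInter.2 fun k => Set.mem_iInter.2 fun hk => hN k hk⟩
  calc volume (subgradientsOn Ω v U) ≤ volume ((⋃ N, A N) ∪ S) := measure_mono hcover
  _ ≤ volume (⋃ N, A N) + volume S := measure_union_le _ _
  _ = volume (⋃ N, A N) := by rw [hSnull, add_zero]
  _ = ⨆ N, volume (A N) := Directed.measure_iUnion (hmono.directed_le)
  _ ≤ Filter.liminf (fun k => volume (subgradientsOn Ω (u k) U)) Filter.atTop := by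
      rw [Filter.liminf_eq_iSup_iInf_of_nat]
      apply iSup_mono
      intro N
      apply le_iInf₂
      intro k hk
      exact measure_mono (Set.iInter₂_subset
        (s := fun k (_ : N ≤ k) => subgradientsOn Ω (u k) U) k hk)

end Aux4

section Main
open Metric Set Filter

variable {n : ℕ} {Ω : Set (EuclideanSpace ℝ (Fin n))}

/-- Convergence of the lintegrals of a nonnegative test function. -/
lemma lintegral_tendsto_of_MA (hΩopen : IsOpen Ω) (hΩbd : Bornology.IsBounded Ω)
    {u : ℕ → EuclideanSpace ℝ (Fin n) → ℝ} {v : EuclideanSpace ℝ (Fin n) → ℝ}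
    (hcv : ∀ k, ConvexOn ℝ Ω (u k)) (hv : ContinuousOn v Ω)
    (hconv : TendstoLocallyUniformlyOn u v Filter.atTop Ω)
    {μ : ℕ → Measure (EuclideanSpace ℝ (Fin n))} {ν : Measure (EuclideanSpace ℝ (Fin n))}
    (hμ : ∀ k, IsMAMeasureOn Ω (u k) (μ k)) (hν : IsMAMeasureOn Ω v ν)
    {f : EuclideanSpace ℝ (Fin n) → ℝ} (hf : Continuous f) (hfnn : 0 ≤ f)
    (hfc : HasCompactSupport f) (hfs : tsupport f ⊆ Ω) :
    Filter.Tendsto (fun k => ∫⁻ x, ENNReal.ofReal (f x) ∂(μ k)) Filter.atTop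
      (nhds (∫⁻ x, ENNReal.ofReal (f x) ∂ν)) := by
  have hu : ∀ k, ContinuousOn (u k) Ω := fun k => (hcv k).continuousOn hΩopen
  set K := tsupport f with hKdef
  have hK : IsCompact K := hfc
  have hKΩ : K ⊆ Ω := hfs
  have hKm : MeasurableSet K := (isClosed_tsupport f).measurableSet
  -- basic sets
  have hKt : ∀ t : ℝ, 0 < t → IsCompact {a | t ≤ f a} ∧ {a | t ≤ f a} ⊆ Ω ∧
      MeasurableSet {a | t ≤ f a} := by
    intro t ht
    have hclosed : IsClosed {a | t ≤ f a} := isClosed_le continuous_const hf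
    have hsubK : {a | t ≤ f a} ⊆ K := by
      intro a ha
      refine subset_tsupport f ?_
      simp only [Function.mem_support]
      intro h0
      simp only [Set.mem_setOf_eq, h0] at ha
      linarith
    exact ⟨hK.of_isClosed_subset hclosed hsubK, hsubK.trans hKΩ, hclosed.measurableSet⟩
  have hUt : ∀ t : ℝ, 0 < t → IsOpen {a | t < f a} ∧ {a | t < f a} ⊆ Ω ∧
      IsCompact (closure {a | t < f a}) ∧ closure {a | t < f a} ⊆ Ω := by
    intro t ht
    obtain ⟨hc, hsub, _⟩ := hKt t ht
    have hopen : IsOpen {a | t < f a} := isOpen_lt continuous_const hf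
    have hsub2 : {a | t < f a} ⊆ {a | t ≤ f a} := fun a ha => by
      simp only [Set.mem_setOf_eq] at ha ⊢; exact le_of_lt ha
    have hcl : closure {a | t < f a} ⊆ {a | t ≤ f a} :=
      closure_minimal hsub2 (isClosed_le continuous_const hf)
    exact ⟨hopen, hsub2.trans (hKt t ht).2.1, hc.of_isClosed_subset isClosed_closure hcl,
      hcl.trans (hKt t ht).2.1⟩
  -- antitone measurability
  have hmlt : ∀ k, Measurable (fun t : ℝ => μ k {a | t < f a}) := fun k =>
    Antitone.measurable (fun s t hst => measure_mono (fun a ha => lt_of_le_of_lt hst ha))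
  have hmle : ∀ k, Measurable (fun t : ℝ => μ k {a | t ≤ f a}) := fun k =>
    Antitone.measurable (fun s t hst => measure_mono (fun a ha => le_trans hst ha))
  -- layer cake representations
  have hlcν : ∫⁻ x, ENNReal.ofReal (f x) ∂ν = ∫⁻ t in Set.Ioi 0, ν {a | t < f a} :=
    lintegral_eq_lintegral_meas_lt ν (Filter.Eventually.of_forall hfnn)
      hf.measurable.aemeasurable
  have hlcμlt : ∀ k, ∫⁻ x, ENNReal.ofReal (f x) ∂(μ k) = ∫⁻ t in Set.Ioi 0, μ k {a | t < f a} :=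
    fun k => lintegral_eq_lintegral_meas_lt (μ k) (Filter.Eventually.of_forall hfnn)
      hf.measurable.aemeasurable
  have hlcμle : ∀ k, ∫⁻ x, ENNReal.ofReal (f x) ∂(μ k) = ∫⁻ t in Set.Ioi 0, μ k {a | t ≤ f a} :=
    fun k => lintegral_eq_lintegral_meas_le (μ k) (Filter.Eventually.of_forall hfnn)
      hf.measurable.aemeasurable
  -- liminf direction
  have hliminf : ∫⁻ x, ENNReal.ofReal (f x) ∂ν ≤
      Filter.liminf (fun k => ∫⁻ x, ENNReal.ofReal (f x) ∂(μ k)) Filter.atTop := by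
    rw [hlcν]
    have step1 : ∫⁻ t in Set.Ioi 0, ν {a | t < f a} ≤
        ∫⁻ t in Set.Ioi 0, Filter.liminf (fun k => μ k {a | t < f a}) Filter.atTop := by
      apply lintegral_mono_ae
      filter_upwards [ae_restrict_mem measurableSet_Ioi] with t ht
      obtain ⟨hopen, hsub, hclc, hclΩ⟩ := hUt t ht
      have h2 : ν {a | t < f a} = volume (subgradientsOn Ω v {a | t < f a}) :=
        hν _ hsub hopen.measurableSet
      have h3 : (fun k => μ k {a | t < f a}) =
          (fun k => volume (subgradientsOn Ω (u k) {a | t < f a})) :=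
        funext fun k => hμ k _ hsub hopen.measurableSet
      rw [h2, h3]
      exact fact2 hΩopen hΩbd hcv hv hconv hopen hclc hclΩ
    have step2 : ∫⁻ t in Set.Ioi 0, Filter.liminf (fun k => μ k {a | t < f a}) Filter.atTop ≤
        Filter.liminf (fun k => ∫⁻ t in Set.Ioi 0, μ k {a | t < f a}) Filter.atTop :=
      lintegral_liminf_le hmlt
    refine le_trans (le_trans step1 step2) ?_
    apply le_of_eq
    congr 1
    exact funext fun k => (hlcμlt k).symm
  -- uniform bound
  obtain ⟨x₀, hx₀⟩ := hf.exists_forall_ge_of_hasCompactSupport hfc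
  set M := f x₀ with hM
  have hM0 : 0 ≤ M := hfnn x₀
  obtain ⟨R, hR⟩ := eventual_ball hΩopen hv hconv hK hKΩ
  obtain ⟨N, hN⟩ := Filter.eventually_atTop.1 hR
  have hbK : ∀ k, μ k K = volume (subgradientsOn Ω (u k) K) := fun k => hμ k K hKΩ hKm
  have hfinK : ∀ k, μ k K < ⊤ := by
    intro k
    rw [hbK k]
    exact MAvol_lt_top hK hKΩ (hu k) hΩopen
  set B := volume (closedBall (0 : EuclideanSpace ℝ (Fin n)) R) with hBdef
  set C := B ⊔ (Finset.range N).sup (fun k => μ k K) with hCdef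
  have hClt : C < ⊤ := by
    rw [hCdef]
    apply max_lt measure_closedBall_lt_top
    rcases Finset.range N |>.eq_empty_or_nonempty with h | h
    · rw [h]; simp
    · exact (Finset.sup_lt_iff (by simp)).2 fun b _ => hfinK b
  have hC : ∀ k, μ k K ≤ C := by
    intro k
    rw [hCdef]
    rcases lt_or_ge k N with h | h
    · exact le_trans (Finset.le_sup (f := fun k => μ k K) (Finset.mem_range.2 h)) le_sup_right
    · exact le_trans (by rw [hbK k]; exact measure_mono (hN k h)) le_sup_left
  -- limsup direction
  have hlimsup : Filter.limsup (fun k => ∫⁻ x, ENNReal.ofReal (f x) ∂(μ k)) Filter.atTop ≤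
      ∫⁻ x, ENNReal.ofReal (f x) ∂ν := by
    have hrw : (fun k => ∫⁻ x, ENNReal.ofReal (f x) ∂(μ k)) =
        fun k => ∫⁻ t in Set.Ioi 0, μ k {a | t ≤ f a} := funext fun k => hlcμle k
    rw [hrw]
    set g : ℝ → ℝ≥0∞ := (Set.Ioc 0 M).indicator (fun _ => C) with hgdef
    have hbound : ∀ k, (fun t => μ k {a | t ≤ f a}) ≤ᶠ[ae (volume.restrict (Set.Ioi 0))] g := by
      intro k
      filter_upwards [ae_restrict_mem measurableSet_Ioi] with t ht
      rcases le_or_gt t M with htM | htM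
      · have hsubK : {a | t ≤ f a} ⊆ K := by
          intro a ha
          refine subset_tsupport f ?_
          simp only [Function.mem_support]
          intro h0
          simp only [Set.mem_setOf_eq, h0] at ha
          exact absurd (lt_of_lt_of_le ht ha) (lt_irrefl 0)
        have : g t = C := by
          rw [hgdef, Set.indicator_of_mem (Set.mem_Ioc.2 ⟨ht, htM⟩)]
        rw [this]
        exact le_trans (measure_mono hsubK) (hC k)
      · have hempty : {a | t ≤ f a} = ∅ := by
          ext a
          simp only [Set.mem_setOf_eq, Set.mem_empty_iff_false, iff_false, not_le]
          exact lt_of_le_of_lt (hx₀ a) htM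
        rw [hempty]
        simp
    have hgfin : ∫⁻ t in Set.Ioi 0, g t ∂volume ≠ ⊤ := by
      have h1 : ∫⁻ t in Set.Ioi 0, g t ∂volume ≤ C * volume (Set.Ioc 0 M) := by
        rw [hgdef, lintegral_indicator measurableSet_Ioc]
        rw [setLIntegral_const]
        exact mul_le_mul_right (Measure.restrict_apply_le _ _) C
      refine (lt_of_le_of_lt h1 ?_).ne
      apply ENNReal.mul_lt_top hClt
      rw [Real.volume_Ioc]
      exact ENNReal.ofReal_lt_top
    have hrev := limsup_lintegral_le (μ := volume.restrict (Set.Ioi 0))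
      (f := fun k t => μ k {a | t ≤ f a}) g hmle hbound hgfin
    refine le_trans hrev ?_
    rw [hlcν]
    have step : ∫⁻ t in Set.Ioi 0, Filter.limsup (fun k => μ k {a | t ≤ f a}) Filter.atTop ≤
        ∫⁻ t in Set.Ioi 0, ν {a | t ≤ f a} := by
      apply lintegral_mono_ae
      filter_upwards [ae_restrict_mem measurableSet_Ioi] with t ht
      obtain ⟨hc, hsub, hmeas⟩ := hKt t ht
      have h2 : ν {a | t ≤ f a} = volume (subgradientsOn Ω v {a | t ≤ f a}) :=
        hν _ hsub hmeas
      have h3 : (fun k => μ k {a | t ≤ f a}) =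
          (fun k => volume (subgradientsOn Ω (u k) {a | t ≤ f a})) :=
        funext fun k => hμ k _ hsub hmeas
      rw [h2, h3]
      exact fact1 hΩopen hu hv hconv hc hsub
    refine le_trans step ?_
    apply le_of_eq
    exact lintegral_congr_ae (meas_le_ae_eq_meas_lt ν (volume.restrict (Set.Ioi 0)) f)
  exact tendsto_of_le_liminf_of_limsup_le hliminf hlimsup

/-- bounded lintegral / integrability helper -/
lemma int_helper {μ : Measure (EuclideanSpace ℝ (Fin n))} {f : EuclideanSpace ℝ (Fin n) → ℝ}
    (hf : Continuous f) (hfnn : 0 ≤ f) {K : Set (EuclideanSpace ℝ (Fin n))}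
    (hKm : MeasurableSet K) (htsf : tsupport f ⊆ K) {M : ℝ}
    (hM : ∀ x, f x ≤ M) (hfin : μ K ≠ ⊤) :
    Integrable f μ ∧ ∫⁻ x, ENNReal.ofReal (f x) ∂μ ≠ ⊤ := by
  have hb : ∀ x, ENNReal.ofReal (f x) ≤ K.indicator (fun _ => ENNReal.ofReal M) x := by
    intro x
    by_cases hx : x ∈ K
    · rw [Set.indicator_of_mem hx]
      exact ENNReal.ofReal_le_ofReal (hM x)
    · rw [Set.indicator_of_notMem hx]
      have : f x = 0 := image_eq_zero_of_notMem_tsupport (fun h => hx (htsf h))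
      simp [this]
  have hlt : ∫⁻ x, ENNReal.ofReal (f x) ∂μ < ⊤ := by
    calc ∫⁻ x, ENNReal.ofReal (f x) ∂μ
        ≤ ∫⁻ x, K.indicator (fun _ => ENNReal.ofReal M) x ∂μ := lintegral_mono hb
    _ = ENNReal.ofReal M * μ K := by
        rw [lintegral_indicator hKm, setLIntegral_const]
    _ < ⊤ := ENNReal.mul_lt_top ENNReal.ofReal_lt_top (lt_top_iff_ne_top.2 hfin)
  refine ⟨⟨hf.aestronglyMeasurable, ?_⟩, hlt.ne⟩
  rw [hasFiniteIntegral_iff_norm]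
  have : ∀ x, ENNReal.ofReal ‖f x‖ = ENNReal.ofReal (f x) := by
    intro x
    rw [Real.norm_eq_abs, abs_of_nonneg (hfnn x)]
  rw [lintegral_congr this]
  exact hlt


end Main

/-- If convex functions `u k` converge locally uniformly on `Ω` to `u`, then `u` is convex
and the Monge–Ampère measures `M(u k)` converge weakly to `Mu` in `Ω`. -/
theorem MA_weak_convergence {n : ℕ} (Ω : Set (EuclideanSpace ℝ (Fin n)))
    (hΩopen : IsOpen Ω) (hΩbd : Bornology.IsBounded Ω) (hΩconv : Convex ℝ Ω)
    (u : ℕ → EuclideanSpace ℝ (Fin n) → ℝ) (v : EuclideanSpace ℝ (Fin n) → ℝ)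
    (hcv : ∀ k, ConvexOn ℝ Ω (u k))
    (hconv : TendstoLocallyUniformlyOn u v Filter.atTop Ω) :
    ConvexOn ℝ Ω v ∧
      ∀ (μ : ℕ → Measure (EuclideanSpace ℝ (Fin n))) (ν : Measure (EuclideanSpace ℝ (Fin n))),
        (∀ k, IsMAMeasureOn Ω (u k) (μ k)) → IsMAMeasureOn Ω v ν →
        ∀ φ : EuclideanSpace ℝ (Fin n) → ℝ,
          Continuous φ → HasCompactSupport φ → tsupport φ ⊆ Ω →
          Filter.Tendsto (fun k => ∫ x, φ x ∂(μ k)) Filter.atTop (nhds (∫ x, φ x ∂ν)) := by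
  have hvc : ConvexOn ℝ Ω v := convexOn_limit hΩconv hcv hconv
  refine ⟨hvc, ?_⟩
  intro μ ν hμ hν φ hφ hφc hφs
  have hv : ContinuousOn v Ω := hvc.continuousOn hΩopen
  set f : EuclideanSpace ℝ (Fin n) → ℝ := fun x => max (φ x) 0 with hfdef
  set g : EuclideanSpace ℝ (Fin n) → ℝ := fun x => max (-φ x) 0 with hgdef
  have hfcont : Continuous f := hφ.max continuous_const
  have hgcont : Continuous g := hφ.neg.max continuous_const
  have hfnn : 0 ≤ f := fun x => le_max_right _ _
  have hgnn : 0 ≤ g := fun x => le_max_right _ _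
  have hfsupp : tsupport f ⊆ tsupport φ := by
    apply closure_mono
    intro x hx
    simp only [Function.mem_support] at hx ⊢
    intro h; apply hx; simp [hfdef, h]
  have hgsupp : tsupport g ⊆ tsupport φ := by
    apply closure_mono
    intro x hx
    simp only [Function.mem_support] at hx ⊢
    intro h; apply hx; simp [hgdef, h]
  have hfc : HasCompactSupport f := hφc.isCompact.of_isClosed_subset (isClosed_tsupport f) hfsupp
  have hgc : HasCompactSupport g := hφc.isCompact.of_isClosed_subset (isClosed_tsupport g) hgsupp
  have hfs : tsupport f ⊆ Ω := hfsupp.trans hφs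
  have hgs : tsupport g ⊆ Ω := hgsupp.trans hφs
  -- the two lintegral convergences
  have Tf := lintegral_tendsto_of_MA hΩopen hΩbd hcv hv hconv hμ hν hfcont hfnn hfc hfs
  have Tg := lintegral_tendsto_of_MA hΩopen hΩbd hcv hv hconv hμ hν hgcont hgnn hgc hgs
  -- bounds
  obtain ⟨xf, hxf⟩ := hfcont.exists_forall_ge_of_hasCompactSupport hfc
  obtain ⟨xg, hxg⟩ := hgcont.exists_forall_ge_of_hasCompactSupport hgc
  have hKm : MeasurableSet (tsupport φ) := (isClosed_tsupport φ).measurableSet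
  have hνK : ν (tsupport φ) ≠ ⊤ := by
    rw [hν (tsupport φ) hφs hKm]
    exact (MAvol_lt_top hφc.isCompact hφs hv hΩopen).ne
  have hμK : ∀ k, μ k (tsupport φ) ≠ ⊤ := by
    intro k
    rw [hμ k (tsupport φ) hφs hKm]
    exact (MAvol_lt_top hφc.isCompact hφs ((hcv k).continuousOn hΩopen) hΩopen).ne
  obtain ⟨hIfν, hFν⟩ := int_helper hfcont hfnn hKm hfsupp hxf hνK
  obtain ⟨hIgν, hGν⟩ := int_helper hgcont hgnn hKm hgsupp hxg hνK
  have hIf : ∀ k, Integrable f (μ k) := fun k =>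
    (int_helper hfcont hfnn hKm hfsupp hxf (hμK k)).1
  have hIg : ∀ k, Integrable g (μ k) := fun k =>
    (int_helper hgcont hgnn hKm hgsupp hxg (hμK k)).1
  -- rewrite the integrals
  have hφeq : φ = fun x => f x - g x := by
    funext x
    simp only [hfdef, hgdef]
    rcases le_total (φ x) 0 with h | h
    · rw [max_eq_right h, max_eq_left (by linarith)]; ring
    · rw [max_eq_left h, max_eq_right (by linarith)]; ring
  have hint : ∀ (m : Measure (EuclideanSpace ℝ (Fin n))), Integrable f m → Integrable g m →
      ∫ x, φ x ∂m = (∫⁻ x, ENNReal.ofReal (f x) ∂m).toReal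
        - (∫⁻ x, ENNReal.ofReal (g x) ∂m).toReal := by
    intro m hf' hg'
    rw [hφeq, integral_sub hf' hg',
      integral_eq_lintegral_of_nonneg_ae (Filter.Eventually.of_forall hfnn)
        hfcont.aestronglyMeasurable,
      integral_eq_lintegral_of_nonneg_ae (Filter.Eventually.of_forall hgnn)
        hgcont.aestronglyMeasurable]
  have hgoal : (fun k => ∫ x, φ x ∂(μ k)) =
      fun k => (∫⁻ x, ENNReal.ofReal (f x) ∂(μ k)).toReal
        - (∫⁻ x, ENNReal.ofReal (g x) ∂(μ k)).toReal :=
    funext fun k => hint (μ k) (hIf k) (hIg k)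
  rw [hgoal, hint ν hIfν hIgν]
  exact Filter.Tendsto.sub ((ENNReal.tendsto_toReal hFν).comp Tf)
    ((ENNReal.tendsto_toReal hGν).comp Tg)
end

section
/- Let Ω ⊆ ℝ^n be a bounded open convex set and let u, v be convex functions on Ω with u ≤ v in Ω and such that u and v extend continuously to closure(Ω) with u = v on ∂Ω. Then ∂v(Ω) ⊆ ∂u(Ω), i.e. every subgradient attained by v at some point of Ω is also attained by u at some point of Ω. -/
open MeasureTheory
open scoped RealInnerProductSpace ENNReal

/-- If `u ≤ v` in `Ω` with `u = v` on `∂Ω`, then `∂v(Ω) ⊆ ∂u(Ω)`. -/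
theorem subgradients_mono {n : ℕ} (Ω : Set (EuclideanSpace ℝ (Fin n)))
    (hΩopen : IsOpen Ω) (hΩbd : Bornology.IsBounded Ω) (hΩconv : Convex ℝ Ω)
    (u v : EuclideanSpace ℝ (Fin n) → ℝ)
    (hucv : ConvexOn ℝ Ω u) (hvcv : ConvexOn ℝ Ω v)
    (hle : ∀ x ∈ Ω, u x ≤ v x)
    (hu : ContinuousOn u (closure Ω)) (hv : ContinuousOn v (closure Ω))
    (hbd : ∀ x ∈ frontier Ω, u x = v x) :
    subgradientsOn Ω v Ω ⊆ subgradientsOn Ω u Ω := by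
  intro p hp
  simp only [subgradientsOn, Set.mem_iUnion, Set.mem_setOf_eq] at hp ⊢
  obtain ⟨x₀, hx₀, hsub⟩ := hp
  set w : EuclideanSpace ℝ (Fin n) → ℝ := fun y => u y - (v x₀ + ⟪p, y - x₀⟫) with hw
  have hinner : Continuous fun y : EuclideanSpace ℝ (Fin n) => (⟪p, y - x₀⟫ : ℝ) :=
    continuous_const.inner (continuous_id.sub continuous_const)
  have hwcont : ContinuousOn w (closure Ω) :=
    hu.sub (continuous_const.add hinner).continuousOn
  have hcpt : IsCompact (closure Ω) := hΩbd.isCompact_closure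
  obtain ⟨x₁, hx₁mem, hmin⟩ := hcpt.exists_isMinOn ⟨x₀, subset_closure hx₀⟩ hwcont
  -- a minimizer in Ω exists
  have key : ∃ x₂ ∈ Ω, ∀ y ∈ Ω, w x₂ ≤ w y := by
    by_cases hx₁ : x₁ ∈ Ω
    · exact ⟨x₁, hx₁, fun y hy => hmin (subset_closure hy)⟩
    · -- x₁ is on the frontier
      have hfr : x₁ ∈ frontier Ω := by
        rw [hΩopen.frontier_eq]; exact ⟨hx₁mem, hx₁⟩
      -- v y ≥ affine on closure Ω, in particular at x₁
      have hg : 0 ≤ v x₁ - (v x₀ + ⟪p, x₁ - x₀⟫) := by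
        have hcw : ContinuousWithinAt (fun y => v y - (v x₀ + ⟪p, y - x₀⟫)) Ω x₁ :=
          ((hv.sub (continuous_const.add hinner).continuousOn) x₁ hx₁mem).mono subset_closure
        have hne : (nhdsWithin x₁ Ω).NeBot := mem_closure_iff_nhdsWithin_neBot.mp hx₁mem
        refine ge_of_tendsto hcw ?_
        filter_upwards [self_mem_nhdsWithin] with y hy
        have := hsub y hy; linarith
      have hwx₁ : 0 ≤ w x₁ := by
        have := hbd x₁ hfr
        simp only [hw]; linarith
      have hwx₀ : w x₀ ≤ 0 := by
        have h1 := hle x₀ hx₀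
        simp only [hw, sub_self, inner_zero_right]
        linarith
      have heq : w x₀ = w x₁ := le_antisymm (by linarith [hmin (subset_closure hx₀)]) (hmin (subset_closure hx₀))
      exact ⟨x₀, hx₀, fun y hy => heq ▸ (heq ▸ hmin (subset_closure hy) : w x₁ ≤ w y)⟩
  obtain ⟨x₂, hx₂, hmin₂⟩ := key
  refine ⟨x₂, hx₂, fun y hy => ?_⟩
  have h := hmin₂ y hy
  simp only [hw] at h
  have e1 : (⟪p, y - x₀⟫ : ℝ) = ⟪p, y⟫ - ⟪p, x₀⟫ := inner_sub_right _ _ _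
  have e2 : (⟪p, x₂ - x₀⟫ : ℝ) = ⟪p, x₂⟫ - ⟪p, x₀⟫ := inner_sub_right _ _ _
  have e3 : (⟪p, y - x₂⟫ : ℝ) = ⟪p, y⟫ - ⟪p, x₂⟫ := inner_sub_right _ _ _
  rw [e1, e2] at h
  rw [e3]
  linarith
end

section
/- Let z : ℝ^n → ℝ^m be a map each of whose components is a convex function, let W be a k×m real matrix with nonnegative entries, let L be a k×n real matrix, let b ∈ ℝ^k, and let g : ℝ → ℝ be convex and monotone nondecreasing. Then each component of the map x ↦ G(W z(x) + L x + b), where G applies g to each coordinate, is a convex function of x. Consequently, every input convex neural network, defined recursively by z_1 = g_0(L_0 x + b_0), z_{j+1} = g_j(W_j z_j + L_j x + b_j) for 1 ≤ j ≤ L−1 with each W_j having nonnegative entries and each g_j convex increasing and acting componentwise, is a convex function of its input x. -/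
lemma icnn_step (n m k : ℕ) (z : (Fin n → ℝ) → Fin m → ℝ)
    (hz : ∀ i, ConvexOn ℝ Set.univ fun x => z x i)
    (W : Matrix (Fin k) (Fin m) ℝ) (hW : ∀ i j, 0 ≤ W i j)
    (L : Matrix (Fin k) (Fin n) ℝ) (b : Fin k → ℝ) (g : ℝ → ℝ)
    (hg : ConvexOn ℝ Set.univ g) (hgm : Monotone g) (i : Fin k) :
    ConvexOn ℝ Set.univ fun x => g ((W.mulVec (z x) + L.mulVec x + b) i) := by
  have hF : ∀ (x y : Fin n → ℝ) (a c : ℝ), 0 ≤ a → 0 ≤ c → a + c = 1 →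
      (W.mulVec (z (a • x + c • y)) + L.mulVec (a • x + c • y) + b) i ≤
      a * (W.mulVec (z x) + L.mulVec x + b) i + c * (W.mulVec (z y) + L.mulVec y + b) i := by
    intro x y a c ha hc hac
    simp only [Pi.add_apply, Pi.smul_apply, Matrix.mulVec, dotProduct, smul_eq_mul]
    have h2 : ∑ l, W i l * z (a • x + c • y) l ≤
        ∑ l, W i l * (a * z x l + c * z y l) := by
      apply Finset.sum_le_sum
      intro l _
      refine mul_le_mul_of_nonneg_left ?_ (hW i l)
      simpa using (hz l).2 (Set.mem_univ x) (Set.mem_univ y) ha hc hac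
    have h3 : ∑ l, W i l * (a * z x l + c * z y l) =
        a * ∑ l, W i l * z x l + c * ∑ l, W i l * z y l := by
      rw [Finset.mul_sum, Finset.mul_sum, ← Finset.sum_add_distrib]
      exact Finset.sum_congr rfl fun l _ => by ring
    have h4 : ∑ l, L i l * (a * x l + c * y l) =
        a * ∑ l, L i l * x l + c * ∑ l, L i l * y l := by
      rw [Finset.mul_sum, Finset.mul_sum, ← Finset.sum_add_distrib]
      exact Finset.sum_congr rfl fun l _ => by ring
    have h5 : b i = a * b i + c * b i := by rw [← add_mul, hac, one_mul]
    linarith [h2, h3.le, h4.le]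
  refine ⟨convex_univ, fun x _ y _ a c ha hc hac => ?_⟩
  calc g ((W.mulVec (z (a • x + c • y)) + L.mulVec (a • x + c • y) + b) i)
      ≤ g (a * (W.mulVec (z x) + L.mulVec x + b) i +
          c * (W.mulVec (z y) + L.mulVec y + b) i) := hgm (hF x y a c ha hc hac)
    _ ≤ a * g ((W.mulVec (z x) + L.mulVec x + b) i) +
        c * g ((W.mulVec (z y) + L.mulVec y + b) i) := by
        simpa using hg.2 (Set.mem_univ _) (Set.mem_univ _) ha hc hac


/-- The layers of an input convex neural network: `z_0 = 0`,
`z_{j+1}(x) = g_j(W_j z_j(x) + L_j x + b_j)` (in particular `z_1 = g_0(L_0 x + b_0)`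
when `z_0 = 0`). -/
def icnnLayer (n : ℕ) (d : ℕ → ℕ) (g : ℕ → ℝ → ℝ)
    (W : (j : ℕ) → Matrix (Fin (d (j + 1))) (Fin (d j)) ℝ)
    (L : (j : ℕ) → Matrix (Fin (d (j + 1))) (Fin n) ℝ)
    (b : (j : ℕ) → Fin (d (j + 1)) → ℝ) : (j : ℕ) → (Fin n → ℝ) → Fin (d j) → ℝ
  | 0 => fun _ => 0
  | j + 1 => fun x i =>
      g j (((W j).mulVec (icnnLayer n d g W L b j x) + (L j).mulVec x + b j) i)

/-- Each component of `x ↦ G(W z(x) + L x + b)` is convex whenever the components of `z` are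
convex, `W` has nonnegative entries and `g` is convex and nondecreasing; consequently every
input convex neural network is a convex function of its input. -/
theorem icnn_convex (n : ℕ) :
    (∀ (m k : ℕ) (z : (Fin n → ℝ) → Fin m → ℝ),
      (∀ i, ConvexOn ℝ Set.univ fun x => z x i) →
      ∀ (W : Matrix (Fin k) (Fin m) ℝ), (∀ i j, 0 ≤ W i j) →
      ∀ (L : Matrix (Fin k) (Fin n) ℝ) (b : Fin k → ℝ) (g : ℝ → ℝ),
        ConvexOn ℝ Set.univ g → Monotone g →
        ∀ i, ConvexOn ℝ Set.univ fun x => g ((W.mulVec (z x) + L.mulVec x + b) i)) ∧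
    (∀ (d : ℕ → ℕ) (g : ℕ → ℝ → ℝ)
        (W : (j : ℕ) → Matrix (Fin (d (j + 1))) (Fin (d j)) ℝ)
        (L : (j : ℕ) → Matrix (Fin (d (j + 1))) (Fin n) ℝ)
        (b : (j : ℕ) → Fin (d (j + 1)) → ℝ),
      (∀ j, ConvexOn ℝ Set.univ (g j) ∧ Monotone (g j)) →
      (∀ j i l, 0 ≤ W j i l) →
      ∀ (j : ℕ) (i : Fin (d j)),
        ConvexOn ℝ Set.univ fun x => icnnLayer n d g W L b j x i) := by
  constructor
  · exact fun m k z hz W hW L b g hg hgm i =>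
      icnn_step n m k z hz W hW L b g hg hgm i
  · intro d g W L b hg hW j
    induction j with
    | zero => exact fun i => convexOn_const 0 convex_univ
    | succ j ih =>
      intro i
      exact icnn_step n (d j) (d (j + 1)) (icnnLayer n d g W L b j) ih (W j) (hW j)
        (L j) (b j) (g j) (hg j).1 (hg j).2 i
end

section
/- Define u : ℝ² → ℝ radially by u(x) = 0 if r := |x| ≤ 1, and u(x) = r√(r² − 1) − ln(r + √(r² − 1)) if r > 1. Then u is convex and continuously differentiable on ℝ², its radial derivative equals 2√(r² − 1) for r > 1 and 0 for r ≤ 1, and its Monge–Ampère measure on ℝ² satisfies Mu(E) = 4 · |E ∩ {x : |x| > 1}| for every Borel set E ⊆ ℝ²; that is, u is an Alexandrov solution of det D²u = f with f(x) = 0 for |x| ≤ 1 and f(x) = 4 for |x| > 1. -/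
open MeasureTheory
open scoped RealInnerProductSpace ENNReal

/-- The radial profile `r ↦ 0` for `r ≤ 1`, `r ↦ r√(r²-1) - ln(r + √(r²-1))` for `r > 1`. -/
noncomputable def radialProfile (r : ℝ) : ℝ :=
  if r ≤ 1 then 0 else r * Real.sqrt (r ^ 2 - 1) - Real.log (r + Real.sqrt (r ^ 2 - 1))

noncomputable def psi (r : ℝ) : ℝ := if r ≤ 1 then 0 else 2 * Real.sqrt (r ^ 2 - 1)

lemma psi_eq (r : ℝ) : psi r = 2 * Real.sqrt (max (r - 1) 0 * (r + 1)) := by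
  unfold psi
  split_ifs with h
  · rw [max_eq_right (by linarith), zero_mul, Real.sqrt_zero, mul_zero]
  · push_neg at h
    rw [max_eq_left (by linarith)]
    ring_nf

lemma continuous_psi : Continuous psi := by
  have : Continuous fun r : ℝ => 2 * Real.sqrt (max (r - 1) 0 * (r + 1)) := by
    continuity
  simpa [funext psi_eq] using this

lemma psi_nonneg (r : ℝ) : 0 ≤ psi r := by
  unfold psi; split_ifs
  · exact le_rfl
  · positivity

lemma monotone_psi : Monotone psi := by
  intro r s hrs
  unfold psi
  split_ifs with h1 h2 h2
  · exact le_rfl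
  · positivity
  · linarith
  · push_neg at h1
    have : 0 ≤ r := by linarith
    gcongr <;> nlinarith

noncomputable def Fcl (r : ℝ) : ℝ :=
  r * Real.sqrt (r ^ 2 - 1) - Real.log (r + Real.sqrt (r ^ 2 - 1))

lemma hasDerivAt_Fcl {r : ℝ} (hr : 1 < r) :
    HasDerivAt Fcl (2 * Real.sqrt (r ^ 2 - 1)) r := by
  set s := Real.sqrt (r ^ 2 - 1) with hs_def
  have hs2 : s ^ 2 = r ^ 2 - 1 := Real.sq_sqrt (by nlinarith)
  have hs0 : 0 < s := Real.sqrt_pos.2 (by nlinarith)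
  have h1 : HasDerivAt (fun r : ℝ => r ^ 2 - 1) (2 * r) r := by
    simpa using ((hasDerivAt_pow 2 r).sub_const 1)
  have hsq : HasDerivAt (fun r : ℝ => Real.sqrt (r ^ 2 - 1)) (2 * r / (2 * s)) r :=
    h1.sqrt (by nlinarith)
  have hmul : HasDerivAt (fun r : ℝ => r * Real.sqrt (r ^ 2 - 1))
      (1 * s + r * (2 * r / (2 * s))) r := (hasDerivAt_id r).mul hsq
  have hadd : HasDerivAt (fun r : ℝ => r + Real.sqrt (r ^ 2 - 1)) (1 + 2 * r / (2 * s)) r :=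
    (hasDerivAt_id r).add hsq
  have hlog : HasDerivAt (fun r : ℝ => Real.log (r + Real.sqrt (r ^ 2 - 1)))
      ((1 + 2 * r / (2 * s)) / (r + s)) r := hadd.log (by nlinarith)
  have := hmul.sub hlog
  have this' : HasDerivAt Fcl _ r := this
  convert this' using 1
  have hrs : r + s ≠ 0 := by nlinarith
  field_simp
  linear_combination (s + r) * hs2

lemma continuousOn_Fcl : ContinuousOn Fcl (Set.Ici 1) := by
  have h1 : ContinuousOn (fun r : ℝ => r * Real.sqrt (r ^ 2 - 1)) (Set.Ici 1) :=
    (continuous_id.mul ((continuous_pow 2).sub continuous_const).sqrt).continuousOn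
  have h2 : ContinuousOn (fun r : ℝ => Real.log (r + Real.sqrt (r ^ 2 - 1))) (Set.Ici 1) := by
    apply ContinuousOn.log
    · exact (continuous_id.add ((continuous_pow 2).sub continuous_const).sqrt).continuousOn
    · intro r hr
      have : (1:ℝ) ≤ r := hr
      have h0 : 0 ≤ Real.sqrt (r ^ 2 - 1) := Real.sqrt_nonneg _
      positivity
  exact h1.sub h2

lemma profile_eq_Fcl {r : ℝ} (hr : 1 ≤ r) : radialProfile r = Fcl r := by
  unfold radialProfile Fcl
  rcases eq_or_lt_of_le hr with h | h
  · subst h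
    simp
  · rw [if_neg (not_le.2 h)]

lemma profile_eq_integral (r : ℝ) : radialProfile r = ∫ t in (1:ℝ)..r, psi t := by
  rcases le_or_gt r 1 with hr | hr
  · rw [radialProfile, if_pos hr]
    rw [intervalIntegral.integral_symm]
    have : ∀ t ∈ Set.uIcc r 1, psi t = 0 := by
      intro t ht
      rw [Set.uIcc_of_le hr] at ht
      exact if_pos ht.2
    rw [intervalIntegral.integral_congr this]
    simp
  · have key : ∫ t in (1:ℝ)..r, psi t = Fcl r - Fcl 1 := by
      apply intervalIntegral.integral_eq_sub_of_hasDeriv_right_of_le hr.le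
      · exact continuousOn_Fcl.mono (Set.Icc_subset_Ici_self)
      · intro x hx
        have := (hasDerivAt_Fcl hx.1).hasDerivWithinAt (s := Set.Ioi x)
        convert this using 1
        rw [psi, if_neg (not_le.2 hx.1)]
      · exact continuous_psi.intervalIntegrable _ _
    have hF1 : Fcl 1 = 0 := by unfold Fcl; norm_num
    rw [key, hF1, sub_zero, profile_eq_Fcl hr.le]

lemma hasDerivAt_profile (r : ℝ) : HasDerivAt radialProfile (psi r) r := by
  have : HasDerivAt (fun u => ∫ t in (1:ℝ)..u, psi t) (psi r) r :=
    (continuous_psi.integral_hasStrictDerivAt 1 r).hasDerivAt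
  simpa [funext profile_eq_integral] using this

lemma deriv_profile (r : ℝ) :
    deriv radialProfile r = if r ≤ 1 then 0 else 2 * Real.sqrt (r ^ 2 - 1) :=
  (hasDerivAt_profile r).deriv

lemma differentiable_profile : Differentiable ℝ radialProfile :=
  fun r => (hasDerivAt_profile r).differentiableAt

lemma convexOn_profile : ConvexOn ℝ Set.univ radialProfile := by
  apply Monotone.convexOn_univ_of_deriv differentiable_profile
  have : deriv radialProfile = psi := funext fun r => (hasDerivAt_profile r).deriv
  rw [this]
  exact monotone_psi

lemma monotone_profile : Monotone radialProfile := by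
  apply monotone_of_deriv_nonneg differentiable_profile
  intro r
  rw [(hasDerivAt_profile r).deriv]; exact psi_nonneg r

abbrev E2 := EuclideanSpace ℝ (Fin 2)

noncomputable def uu (x : E2) : ℝ := radialProfile ‖x‖

lemma convexOn_uu : ConvexOn ℝ Set.univ uu := by
  refine ⟨convex_univ, fun x _ y _ a b ha hb hab => ?_⟩
  calc radialProfile ‖a • x + b • y‖
      ≤ radialProfile (a * ‖x‖ + b * ‖y‖) := by
        apply monotone_profile
        calc ‖a • x + b • y‖ ≤ ‖a • x‖ + ‖b • y‖ := norm_add_le _ _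
          _ = a * ‖x‖ + b * ‖y‖ := by rw [norm_smul, norm_smul,
              Real.norm_of_nonneg ha, Real.norm_of_nonneg hb]
    _ ≤ a * radialProfile ‖x‖ + b * radialProfile ‖y‖ := by
        have := convexOn_profile.2 (Set.mem_univ ‖x‖) (Set.mem_univ ‖y‖) ha hb hab
        simpa [smul_eq_mul] using this

lemma hasFDerivAt_norm2 {x : E2} (hx : x ≠ 0) :
    HasFDerivAt (fun y : E2 => ‖y‖) (innerSL ℝ (‖x‖⁻¹ • x)) x := by
  have h1 : HasFDerivAt (fun y : E2 => ‖y‖ ^ 2) (2 • (innerSL ℝ x)) x := by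
    simpa using (hasFDerivAt_id x).norm_sq
  have h2 : HasFDerivAt (fun y : E2 => Real.sqrt (‖y‖ ^ 2))
      ((1 / (2 * Real.sqrt (‖x‖ ^ 2))) • (2 • (innerSL ℝ x))) x :=
    h1.sqrt (by simpa using pow_ne_zero 2 (norm_ne_zero_iff.2 hx))
  have hx0 : ‖x‖ ≠ 0 := norm_ne_zero_iff.2 hx
  have heq : (fun y : E2 => Real.sqrt (‖y‖ ^ 2)) = fun y : E2 => ‖y‖ :=
    funext fun y => Real.sqrt_sq (norm_nonneg y)
  rw [heq] at h2
  have h2' : HasFDerivAt (fun y : E2 => ‖y‖)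
      ((1 / (2 * Real.sqrt (‖x‖ ^ 2))) • (2 • (innerSL ℝ x))) x := h2
  refine h2'.congr_fderiv ?_
  rw [Real.sqrt_sq (norm_nonneg x)]
  ext v
  simp [real_inner_smul_left]
  ring

noncomputable def grad (x : E2) : E2 :=
  if 1 < ‖x‖ then (2 * Real.sqrt (‖x‖ ^ 2 - 1) / ‖x‖) • x else 0

lemma grad_eq_smul {x : E2} (hx : x ≠ 0) : grad x = (psi ‖x‖ * ‖x‖⁻¹) • x := by
  unfold grad psi
  rcases lt_or_ge 1 ‖x‖ with h | h
  · rw [if_pos h, if_neg (not_le.2 h)]; ring_nf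
  · rw [if_neg (not_lt.2 h), if_pos h, zero_mul, zero_smul]

lemma hasFDerivAt_uu (x : E2) : HasFDerivAt uu (innerSL ℝ (grad x)) x := by
  rcases eq_or_ne x 0 with rfl | hx
  · -- near 0, uu is constant 0
    have hev : uu =ᶠ[nhds (0:E2)] fun _ => (0:ℝ) := by
      filter_upwards [Metric.ball_mem_nhds (0:E2) one_pos] with y hy
      rw [uu, radialProfile, if_pos]
      exact le_of_lt (by simpa using Metric.mem_ball.1 hy)
    have h0 : HasFDerivAt (fun _ : E2 => (0:ℝ)) (0 : E2 →L[ℝ] ℝ) 0 := hasFDerivAt_const _ _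
    have := h0.congr_of_eventuallyEq hev
    simpa [grad] using this
  · have hchain := (hasDerivAt_profile ‖x‖).comp_hasFDerivAt x (hasFDerivAt_norm2 hx)
    have : HasFDerivAt uu (psi ‖x‖ • innerSL ℝ (‖x‖⁻¹ • x)) x := hchain
    convert this using 1
    rw [grad_eq_smul hx]
    ext v
    simp [real_inner_smul_left]
    ring

lemma continuous_gradmap : Continuous fun x : E2 => innerSL ℝ (grad x) := by
  have hg : Continuous grad := by
    rw [continuous_iff_continuousAt]
    intro x
    rcases lt_trichotomy ‖x‖ 1 with h | h | h
    · have hev : grad =ᶠ[nhds x] fun _ => (0:E2) := by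
        have : Metric.ball x (1 - ‖x‖) ∈ nhds x := Metric.ball_mem_nhds _ (by linarith)
        filter_upwards [this] with y hy
        rw [grad, if_neg]
        push_neg
        have : ‖y‖ ≤ ‖y - x‖ + ‖x‖ := by
          have h' := norm_add_le (y - x) x
          simpa using h'
        have hd : ‖y - x‖ < 1 - ‖x‖ := by simpa [dist_eq_norm] using hy
        linarith
      exact (continuousAt_const.congr hev.symm)
    · -- ‖x‖ = 1 : squeeze
      have hgx : grad x = 0 := by rw [grad, if_neg (by rw [h]; exact lt_irrefl 1)]
      rw [ContinuousAt, hgx]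
      apply squeeze_zero_norm (a := fun y : E2 => 2 * Real.sqrt (max (‖y‖ ^ 2 - 1) 0))
      · intro y
        rw [grad]
        split_ifs with hy
        · have hy0 : (0:ℝ) < ‖y‖ := lt_trans one_pos hy
          rw [norm_smul, Real.norm_of_nonneg (by positivity)]
          rw [div_mul_eq_mul_div, mul_div_assoc, div_self hy0.ne', mul_one]
          gcongr
          exact le_max_left _ _
        · simp
      · have hc : Continuous fun y : E2 => 2 * Real.sqrt (max (‖y‖ ^ 2 - 1) 0) := by
          continuity
        have := hc.continuousAt (x := x)
        rw [ContinuousAt] at this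
        convert this using 2
        rw [h]
        norm_num
    · -- ‖x‖ > 1 : locally given by smooth formula
      have hopen : IsOpen {y : E2 | 1 < ‖y‖} := isOpen_lt continuous_const continuous_norm
      have hev : grad =ᶠ[nhds x] fun y => (2 * Real.sqrt (‖y‖ ^ 2 - 1) / ‖y‖) • y := by
        filter_upwards [hopen.mem_nhds h] with y hy
        rw [grad, if_pos hy]
      apply ContinuousAt.congr _ hev.symm
      have hx0 : ‖x‖ ≠ 0 := by positivity
      exact ((((continuous_const.mul
        (((continuous_norm.pow 2).sub continuous_const).sqrt)).continuousAt).div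
        continuous_norm.continuousAt hx0).smul continuousAt_id)
  exact (innerSL ℝ).continuous.comp hg

lemma contDiff_uu : ContDiff ℝ 1 uu := by
  rw [contDiff_one_iff_fderiv]
  refine ⟨fun x => (hasFDerivAt_uu x).differentiableAt, ?_⟩
  have : (fderiv ℝ uu) = fun x => innerSL ℝ (grad x) :=
    funext fun x => (hasFDerivAt_uu x).fderiv
  rw [this]
  exact continuous_gradmap

lemma hasDerivAt_line (x v : E2) (t : ℝ) :
    HasDerivAt (fun s : ℝ => uu (x + s • v)) ⟪grad (x + t • v), v⟫ t := by
  have hL : HasDerivAt (fun s : ℝ => x + s • v) v t := by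
    simpa using ((hasDerivAt_id t).smul_const v).const_add x
  have := (hasFDerivAt_uu (x + t • v)).comp_hasDerivAt t hL
  exact this

lemma support_line (x y : E2) : uu x + ⟪grad x, y - x⟫ ≤ uu y := by
  have hconv : ConvexOn ℝ Set.univ fun t : ℝ => uu (x + t • (y - x)) := by
    have h1 := convexOn_uu.comp_affineMap
      (AffineMap.const ℝ ℝ x + LinearMap.toAffineMap (LinearMap.toSpanSingleton ℝ E2 (y - x)))
    have h2 := h1.subset (Set.subset_univ _) convex_univ
    have h3 : (uu ∘ (AffineMap.const ℝ ℝ x +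
        LinearMap.toAffineMap (LinearMap.toSpanSingleton ℝ E2 (y - x)))) =
        fun t : ℝ => uu (x + t • (y - x)) := by
      funext t
      simp [Function.comp, LinearMap.toSpanSingleton_apply]
    rwa [h3] at h2
  have hd := hasDerivAt_line x (y - x) 0
  rw [show x + (0:ℝ) • (y - x) = x by simp] at hd
  have hsl := hconv.le_slope_of_hasDerivAt (Set.mem_univ 0) (Set.mem_univ 1)
    zero_lt_one hd
  rw [slope_def_field] at hsl
  simp only [one_smul, zero_smul, add_zero, sub_zero, div_one] at hsl
  have h1 : x + (y - x) = y := by abel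
  rw [h1] at hsl
  linarith

lemma subgrad_unique {x p : E2} (hp : ∀ y, uu x + ⟪p, y - x⟫ ≤ uu y) : p = grad x := by
  have key : ∀ v : E2, ⟪grad x - p, v⟫ = 0 := by
    intro v
    have hmin : IsLocalMin (fun t : ℝ => uu (x + t • v) - t * ⟪p, v⟫) 0 := by
      apply Filter.Eventually.of_forall
      intro t
      have := hp (x + t • v)
      simp only [add_sub_cancel_left, real_inner_smul_right] at this
      simp only [zero_smul, add_zero, zero_mul, sub_zero]
      linarith [this]
    have hd : HasDerivAt (fun t : ℝ => uu (x + t • v) - t * ⟪p, v⟫)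
        (⟪grad x, v⟫ - ⟪p, v⟫) 0 := by
      have h1 := hasDerivAt_line x v 0
      rw [show x + (0:ℝ) • v = x by simp] at h1
      have h2 := h1.sub ((hasDerivAt_id (0:ℝ)).mul_const ⟪p, v⟫)
      simp only [one_mul] at h2
      exact h2
    have := hmin.hasDerivAt_eq_zero hd
    rw [inner_sub_left]
    linarith [this]
  have := key (grad x - p)
  rw [inner_self_eq_zero] at this
  rw [sub_eq_zero] at this
  exact this.symm

noncomputable def gderiv (x : E2) : E2 →L[ℝ] E2 :=
  (2 * Real.sqrt (‖x‖ ^ 2 - 1) / ‖x‖) • ContinuousLinearMap.id ℝ E2 +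
  (2 / (Real.sqrt (‖x‖ ^ 2 - 1) * ‖x‖ ^ 3)) • ((innerSL ℝ x).smulRight x)

lemma hasFDerivAt_grad {x : E2} (hx : 1 < ‖x‖) : HasFDerivAt grad (gderiv x) x := by
  set r := ‖x‖ with hr_def
  have hr0 : (0:ℝ) < r := lt_trans one_pos hx
  have hx0 : x ≠ 0 := norm_pos_iff.1 hr0
  set s := Real.sqrt (r ^ 2 - 1) with hs_def
  have hs2 : s ^ 2 = r ^ 2 - 1 := Real.sq_sqrt (by nlinarith)
  have hs0 : (0:ℝ) < s := Real.sqrt_pos.2 (by nlinarith)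
  have hc : HasDerivAt (fun t : ℝ => 2 * Real.sqrt (t ^ 2 - 1) / t)
      (2 / (s * r ^ 2)) r := by
    have h1 : HasDerivAt (fun t : ℝ => t ^ 2 - 1) (2 * r) r := by
      simpa using ((hasDerivAt_pow 2 r).sub_const 1)
    have h2 : HasDerivAt (fun t : ℝ => 2 * Real.sqrt (t ^ 2 - 1))
        (2 * (2 * r / (2 * s))) r := (h1.sqrt (by nlinarith)).const_mul 2
    have h3 := h2.div (hasDerivAt_id r) hr0.ne'
    have h3' : HasDerivAt (fun t : ℝ => 2 * Real.sqrt (t ^ 2 - 1) / t) _ r := h3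
    convert h3' using 1
    simp only [id_eq, ← hs_def]
    field_simp
    ring_nf
    linear_combination hs2
  have hnorm := hasFDerivAt_norm2 hx0
  have hcomp : HasFDerivAt (fun y : E2 => 2 * Real.sqrt (‖y‖ ^ 2 - 1) / ‖y‖)
      ((2 / (s * r ^ 2)) • innerSL ℝ (r⁻¹ • x)) x := by
    have h := hc.comp_hasFDerivAt x hnorm
    exact h
  have hsmul := hcomp.smul (hasFDerivAt_id x)
  have hev : (fun y : E2 => (2 * Real.sqrt (‖y‖ ^ 2 - 1) / ‖y‖) • y) =ᶠ[nhds x] grad := by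
    have hopen : IsOpen {y : E2 | 1 < ‖y‖} := isOpen_lt continuous_const continuous_norm
    filter_upwards [hopen.mem_nhds hx] with y hy
    rw [grad, if_pos hy]
  refine (hsmul.congr_of_eventuallyEq hev.symm).congr_fderiv ?_
  refine ContinuousLinearMap.ext fun v => ?_
  simp only [gderiv, ContinuousLinearMap.add_apply, ContinuousLinearMap.smul_apply,
    ContinuousLinearMap.coe_id', id_eq, ContinuousLinearMap.smulRight_apply,
    innerSL_apply_apply, ContinuousLinearMap.coe_smul', Pi.smul_apply]
  rw [real_inner_smul_left, ← hr_def, ← hs_def]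
  have haux : (2 / (s * r ^ 2) : ℝ) * r⁻¹ = 2 / (s * r ^ 3) := by
    field_simp
  have hscal : (2 / (s * r ^ 2)) • (r⁻¹ * ⟪x, v⟫) = 2 / (s * r ^ 3) * ⟪x, v⟫ := by
    rw [smul_eq_mul, ← mul_assoc, haux]
  rw [hscal, mul_smul]

lemma det_gderiv {x : E2} (hx : 1 < ‖x‖) : (gderiv x).det = 4 := by
  set r := ‖x‖ with hr_def
  have hr0 : (0:ℝ) < r := lt_trans one_pos hx
  set s := Real.sqrt (r ^ 2 - 1) with hs_def
  have hs2 : s ^ 2 = r ^ 2 - 1 := Real.sq_sqrt (by nlinarith)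
  have hs0 : (0:ℝ) < s := Real.sqrt_pos.2 (by nlinarith)
  have hr2 : r ^ 2 = x 0 ^ 2 + x 1 ^ 2 := by
    rw [hr_def, EuclideanSpace.norm_eq, Real.sq_sqrt (by positivity)]
    simp [Fin.sum_univ_two, sq_abs]
  rw [ContinuousLinearMap.det,
    ← LinearMap.det_toMatrix (PiLp.basisFun 2 ℝ (Fin 2)), Matrix.det_fin_two]
  simp only [LinearMap.toMatrix_apply, gderiv, ContinuousLinearMap.coe_coe,
    ContinuousLinearMap.add_apply, ContinuousLinearMap.smul_apply,
    ContinuousLinearMap.coe_id', id_eq, ContinuousLinearMap.smulRight_apply,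
    innerSL_apply_apply, PiLp.basisFun_apply, PiLp.basisFun_repr,
    PiLp.add_apply, PiLp.smul_apply, smul_eq_mul,
    PiLp.inner_apply, RCLike.inner_apply, conj_trivial, Fin.sum_univ_two,
    Pi.single_eq_same, ne_eq, Pi.single_eq_of_ne, Fin.isValue]
  norm_num [Pi.single_apply]
  rw [← hr_def, ← hs_def]
  have key : ∀ A B : ℝ, (2*s/r + 2/(s*r^3)*(A*A)) * (2*s/r + 2/(s*r^3)*(B*B))
      - 2/(s*r^3)*(B*A) * (2/(s*r^3)*(A*B)) = (2*s/r)^2 + (2*s/r)*(2/(s*r^3))*(A^2+B^2) := by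
    intro A B; field_simp; ring_nf
  rw [key, ← hr2]
  field_simp
  linear_combination 4 * hs2

lemma norm_grad {x : E2} (hx : 1 < ‖x‖) : ‖grad x‖ = 2 * Real.sqrt (‖x‖ ^ 2 - 1) := by
  have hx0 : (0:ℝ) < ‖x‖ := lt_trans one_pos hx
  rw [grad, if_pos hx, norm_smul, Real.norm_of_nonneg (by positivity),
    div_mul_eq_mul_div, mul_div_assoc, div_self hx0.ne', mul_one]

lemma injOn_grad : Set.InjOn grad {x : E2 | 1 < ‖x‖} := by
  intro x hx y hy hxy
  have hx1 : 1 < ‖x‖ := hx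
  have hy1 : 1 < ‖y‖ := hy
  have hnx := congrArg norm hxy
  rw [norm_grad hx1, norm_grad hy1] at hnx
  have hsx : Real.sqrt (‖x‖ ^ 2 - 1) = Real.sqrt (‖y‖ ^ 2 - 1) := by linarith
  have hsq : ‖x‖ ^ 2 = ‖y‖ ^ 2 := by
    have h1 : ‖x‖ ^ 2 - 1 = ‖y‖ ^ 2 - 1 := by
      have e1 := Real.sq_sqrt (by nlinarith : (0:ℝ) ≤ ‖x‖ ^ 2 - 1)
      have e2 := Real.sq_sqrt (by nlinarith : (0:ℝ) ≤ ‖y‖ ^ 2 - 1)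
      rw [← e1, ← e2, hsx]
    linarith
  have hnorm : ‖x‖ = ‖y‖ := by
    rw [← Real.sqrt_sq (norm_nonneg x), ← Real.sqrt_sq (norm_nonneg y), hsq]
  rw [grad, grad, if_pos hx1, if_pos hy1, hnorm] at hxy
  have hc : (0:ℝ) < 2 * Real.sqrt (‖y‖ ^ 2 - 1) / ‖y‖ := by
    have : (0:ℝ) < Real.sqrt (‖y‖ ^ 2 - 1) := Real.sqrt_pos.2 (by nlinarith)
    positivity
  exact smul_right_injective E2 hc.ne' hxy

lemma volume_grad_image {E : Set E2} (hE : MeasurableSet E) :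
    volume (grad '' E) = 4 * volume (E ∩ {x : E2 | 1 < ‖x‖}) := by
  set S : Set E2 := {x : E2 | 1 < ‖x‖} with hS
  have hSopen : IsOpen S := isOpen_lt continuous_const continuous_norm
  have hES : MeasurableSet (E ∩ S) := hE.inter hSopen.measurableSet
  have key : volume (grad '' (E ∩ S)) = 4 * volume (E ∩ S) := by
    have h1 := lintegral_abs_det_fderiv_eq_addHaar_image volume hES
      (f' := fun x => gderiv x)
      (fun x hx => (hasFDerivAt_grad hx.2).hasFDerivWithinAt)
      (injOn_grad.mono Set.inter_subset_right)
    rw [← h1]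
    have heq : ∀ x ∈ E ∩ S, ENNReal.ofReal |(gderiv x).det| = 4 := by
      intro x hx
      rw [det_gderiv hx.2]
      norm_num
    rw [setLIntegral_congr_fun hES heq]
    simp [mul_comm]
  have hsub1 : grad '' (E ∩ S) ⊆ grad '' E := Set.image_mono Set.inter_subset_left
  have hsub2 : grad '' E ⊆ grad '' (E ∩ S) ∪ {0} := by
    rintro - ⟨x, hx, rfl⟩
    by_cases h : 1 < ‖x‖
    · exact Or.inl ⟨x, ⟨hx, h⟩, rfl⟩
    · right; simp [grad, if_neg h]
  refine le_antisymm ?_ ?_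
  · calc volume (grad '' E) ≤ volume (grad '' (E ∩ S) ∪ {0}) := measure_mono hsub2
      _ ≤ volume (grad '' (E ∩ S)) + volume {0} := measure_union_le _ _
      _ = 4 * volume (E ∩ S) := by rw [key, measure_singleton, add_zero]
  · rw [← key]
    exact measure_mono hsub1

/-- The radial function `u(x) = radialProfile (|x|)` on `ℝ²` is convex, continuously
differentiable, has radial derivative `2√(r²-1)` for `r > 1` and `0` for `r ≤ 1`, and is
an Alexandrov solution of `det D²u = f` with `f = 4·𝟙_{|x|>1}`; that is, its Monge–Ampère
measure satisfies `Mu(E) = 4|E ∩ {|x| > 1}|` for every Borel set `E`. -/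
theorem discontinuous_source_alexandrov :
    ConvexOn ℝ Set.univ (fun x : EuclideanSpace ℝ (Fin 2) => radialProfile ‖x‖) ∧
    ContDiff ℝ 1 (fun x : EuclideanSpace ℝ (Fin 2) => radialProfile ‖x‖) ∧
    (∀ r : ℝ, deriv radialProfile r =
      if r ≤ 1 then 0 else 2 * Real.sqrt (r ^ 2 - 1)) ∧
    ∀ E : Set (EuclideanSpace ℝ (Fin 2)), MeasurableSet E →
      volume (subgradientsOn Set.univ
          (fun x : EuclideanSpace ℝ (Fin 2) => radialProfile ‖x‖) E) =
        4 * volume (E ∩ {x : EuclideanSpace ℝ (Fin 2) | 1 < ‖x‖}) := by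
  refine ⟨convexOn_uu, contDiff_uu, deriv_profile, ?_⟩
  intro E hE
  have hsub : subgradientsOn Set.univ
      (fun x : EuclideanSpace ℝ (Fin 2) => radialProfile ‖x‖) E = grad '' E := by
    unfold subgradientsOn
    ext p
    simp only [Set.mem_iUnion, Set.mem_setOf_eq, Set.mem_image, exists_prop]
    constructor
    · rintro ⟨x, hx, hpx⟩
      exact ⟨x, hx, (subgrad_unique (fun y => hpx y (Set.mem_univ y))).symm⟩
    · rintro ⟨x, hx, rfl⟩
      exact ⟨x, hx, fun y _ => support_line x y⟩
  rw [hsub, volume_grad_image hE]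
end
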